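/- arXiv:2205.01327 — 5 statements merged into one kernel-verified Lean document; each statement's English description precedes it below -/
import Mathlib

section
/- Let q ≥ 2, and let σ : Fin n → Fin q be i.i.d. uniform. Let Γ and Γ' be two collections of ℓ pairwise disjoint length-r intervals each, with every interval of Γ disjoint from every interval of Γ'. Define Z = Σ_{B ∈ Γ, B' ∈ Γ'} 1{σ|_B = σ|_{B'}} (matching via the translation between left endpoints). Then E[Z] = ℓ² q^{-r} and E[Z²] ≤ E[Z] + ℓ⁴ q^{-2r}. -/
open scoped Classical


lemma count_aux (q n : ℕ) (s : Finset (Fin n)) (f : Fin n → Fin n)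
    (hf : ∀ j ∈ s, f j ∉ s) :
    (Finset.univ.filter (fun σ : Fin n → Fin q => ∀ j ∈ s, σ j = σ (f j))).card
      = q ^ (n - s.card) := by
  classical
  have e : {σ : Fin n → Fin q // ∀ j ∈ s, σ j = σ (f j)} ≃ ({j : Fin n // j ∉ s} → Fin q) :=
  { toFun := fun σ j => σ.1 j.1
    invFun := fun τ => ⟨fun j => if h : j ∈ s then τ ⟨f j, hf j h⟩ else τ ⟨j, h⟩, by
      intro j hj
      simp [hj, hf j hj]⟩
    left_inv := by
      rintro ⟨σ, hσ⟩
      apply Subtype.ext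
      funext j
      by_cases h : j ∈ s
      · simp only [h, dif_pos]
        exact (hσ j h).symm
      · simp [h]
    right_inv := by
      intro τ; funext j; simp [j.2] }
  have h1 := Fintype.card_congr e
  rw [Fintype.card_subtype] at h1
  rw [h1, Fintype.card_fun, Fintype.card_fin]
  congr 1
  have : Fintype.card {j : Fin n // j ∉ s} = Fintype.card (Fin n) - Fintype.card {j : Fin n // j ∈ s} :=
    Fintype.card_subtype_compl _
  rw [this, Fintype.card_fin, Fintype.card_coe]

lemma card_interval (n c r : ℕ) (h : c + r ≤ n) :
    (Finset.univ.filter (fun j : Fin n => c ≤ j.1 ∧ j.1 < c + r)).card = r := by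
  classical
  have : (Finset.univ.filter (fun j : Fin n => c ≤ j.1 ∧ j.1 < c + r))
      = (Finset.Ico c (c + r)).attachFin (fun m hm => by
          simp only [Finset.mem_Ico] at hm; omega) := by
    ext j
    simp [Finset.mem_attachFin, Finset.mem_Ico]
  rw [this, Finset.card_attachFin, Nat.card_Ico]
  omega

lemma count_one (q r n a c : ℕ) (ha : a + r ≤ n) (hc : c + r ≤ n)
    (hd : a + r ≤ c ∨ c + r ≤ a) :
    (Finset.univ.filter (fun σ : Fin n → Fin q =>
      ∀ i < r, ∀ (h1 : a + i < n) (h2 : c + i < n),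
        σ ⟨a + i, h1⟩ = σ ⟨c + i, h2⟩)).card = q ^ (n - r) := by
  classical
  set s : Finset (Fin n) := Finset.univ.filter (fun j : Fin n => c ≤ j.1 ∧ j.1 < c + r) with hsdef
  have hmem : ∀ j : Fin n, j ∈ s ↔ c ≤ j.1 ∧ j.1 < c + r := by
    intro j; simp [hsdef]
  set f : Fin n → Fin n := fun j =>
    if h : c ≤ j.1 ∧ j.1 < c + r then ⟨a + (j.1 - c), by omega⟩ else j with hfdef
  have hfval : ∀ j : Fin n, c ≤ j.1 → j.1 < c + r → (f j).1 = a + (j.1 - c) := by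
    intro j h1 h2
    simp only [hfdef]
    rw [dif_pos ⟨h1, h2⟩]
  have hf : ∀ j ∈ s, f j ∉ s := by
    intro j hj
    rw [hmem] at hj
    rw [hmem]
    rw [hfval j hj.1 hj.2]
    omega
  have hiff : ∀ σ : Fin n → Fin q,
      (∀ i < r, ∀ (h1 : a + i < n) (h2 : c + i < n),
        σ ⟨a + i, h1⟩ = σ ⟨c + i, h2⟩) ↔ ∀ j ∈ s, σ j = σ (f j) := by
    intro σ
    constructor
    · intro h j hj
      rw [hmem] at hj
      obtain ⟨i, hi, hji⟩ : ∃ i, i < r ∧ j.1 = c + i := ⟨j.1 - c, by omega, by omega⟩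
      have h1 : a + i < n := by omega
      have h2 : c + i < n := by omega
      have e1 : j = ⟨c + i, h2⟩ := Fin.ext hji
      have e2 : f j = ⟨a + i, h1⟩ := by
        apply Fin.ext
        rw [hfval j hj.1 hj.2]
        show _ = a + i
        omega
      rw [e2, e1]
      exact (h i hi h1 h2).symm
    · intro h i hi h1 h2
      have hjmem : (⟨c + i, h2⟩ : Fin n) ∈ s := by rw [hmem]; constructor <;> simp <;> omega
      have := h ⟨c + i, h2⟩ hjmem
      have e2 : f ⟨c + i, h2⟩ = ⟨a + i, h1⟩ := by
        apply Fin.ext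
        rw [hfval ⟨c + i, h2⟩ (by simp) (by simp [hi])]
        show a + (c + i - c) = a + i
        omega
      rw [e2] at this
      exact this.symm
  rw [Finset.filter_congr (fun σ _ => hiff σ), count_aux q n s f hf, hsdef,
    card_interval n c r hc]

lemma count_two (q r n a1 c1 a2 c2 : ℕ)
    (ha1 : a1 + r ≤ n) (hc1 : c1 + r ≤ n) (ha2 : a2 + r ≤ n) (hc2 : c2 + r ≤ n)
    (hd11 : a1 + r ≤ c1 ∨ c1 + r ≤ a1) (hd12 : a1 + r ≤ c2 ∨ c2 + r ≤ a1)
    (hd21 : a2 + r ≤ c1 ∨ c1 + r ≤ a2) (hd22 : a2 + r ≤ c2 ∨ c2 + r ≤ a2)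
    (hdc : c1 + r ≤ c2 ∨ c2 + r ≤ c1) :
    (Finset.univ.filter (fun σ : Fin n → Fin q =>
      (∀ i < r, ∀ (h1 : a1 + i < n) (h2 : c1 + i < n),
        σ ⟨a1 + i, h1⟩ = σ ⟨c1 + i, h2⟩) ∧
      (∀ i < r, ∀ (h1 : a2 + i < n) (h2 : c2 + i < n),
        σ ⟨a2 + i, h1⟩ = σ ⟨c2 + i, h2⟩))).card = q ^ (n - 2 * r) := by
  classical
  set s : Finset (Fin n) := Finset.univ.filter
    (fun j : Fin n => (c1 ≤ j.1 ∧ j.1 < c1 + r) ∨ (c2 ≤ j.1 ∧ j.1 < c2 + r)) with hsdef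
  have hmem : ∀ j : Fin n, j ∈ s ↔ (c1 ≤ j.1 ∧ j.1 < c1 + r) ∨ (c2 ≤ j.1 ∧ j.1 < c2 + r) := by
    intro j; simp [hsdef]
  set f : Fin n → Fin n := fun j =>
    if h : c1 ≤ j.1 ∧ j.1 < c1 + r then ⟨a1 + (j.1 - c1), by omega⟩
    else if h' : c2 ≤ j.1 ∧ j.1 < c2 + r then ⟨a2 + (j.1 - c2), by omega⟩ else j with hfdef
  have hfval1 : ∀ j : Fin n, c1 ≤ j.1 → j.1 < c1 + r → (f j).1 = a1 + (j.1 - c1) := by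
    intro j h1 h2
    simp only [hfdef]
    rw [dif_pos ⟨h1, h2⟩]
  have hfval2 : ∀ j : Fin n, c2 ≤ j.1 → j.1 < c2 + r → (f j).1 = a2 + (j.1 - c2) := by
    intro j h1 h2
    simp only [hfdef]
    rw [dif_neg (by omega), dif_pos ⟨h1, h2⟩]
  have hf : ∀ j ∈ s, f j ∉ s := by
    intro j hj
    rw [hmem] at hj
    rw [hmem]
    rcases hj with hj | hj
    · rw [hfval1 j hj.1 hj.2]; omega
    · rw [hfval2 j hj.1 hj.2]; omega
  have hcard : s.card = 2 * r := by
    have : s = (Finset.univ.filter (fun j : Fin n => c1 ≤ j.1 ∧ j.1 < c1 + r)) ∪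
        (Finset.univ.filter (fun j : Fin n => c2 ≤ j.1 ∧ j.1 < c2 + r)) := by
      ext j; simp [hsdef]
    rw [this, Finset.card_union_of_disjoint, card_interval n c1 r hc1,
      card_interval n c2 r hc2]
    · omega
    · rw [Finset.disjoint_left]
      intro j hj1 hj2
      simp only [Finset.mem_filter] at hj1 hj2
      omega
  have hiff : ∀ σ : Fin n → Fin q,
      ((∀ i < r, ∀ (h1 : a1 + i < n) (h2 : c1 + i < n),
        σ ⟨a1 + i, h1⟩ = σ ⟨c1 + i, h2⟩) ∧
      (∀ i < r, ∀ (h1 : a2 + i < n) (h2 : c2 + i < n),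
        σ ⟨a2 + i, h1⟩ = σ ⟨c2 + i, h2⟩)) ↔ ∀ j ∈ s, σ j = σ (f j) := by
    intro σ
    constructor
    · rintro ⟨hA, hB⟩ j hj
      rw [hmem] at hj
      rcases hj with hj | hj
      · obtain ⟨i, hi, hji⟩ : ∃ i, i < r ∧ j.1 = c1 + i := ⟨j.1 - c1, by omega, by omega⟩
        have h1 : a1 + i < n := by omega
        have h2 : c1 + i < n := by omega
        have e1 : j = ⟨c1 + i, h2⟩ := Fin.ext hji
        have e2 : f j = ⟨a1 + i, h1⟩ := by
          apply Fin.ext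
          rw [hfval1 j hj.1 hj.2]
          show _ = a1 + i
          omega
        rw [e2, e1]
        exact (hA i hi h1 h2).symm
      · obtain ⟨i, hi, hji⟩ : ∃ i, i < r ∧ j.1 = c2 + i := ⟨j.1 - c2, by omega, by omega⟩
        have h1 : a2 + i < n := by omega
        have h2 : c2 + i < n := by omega
        have e1 : j = ⟨c2 + i, h2⟩ := Fin.ext hji
        have e2 : f j = ⟨a2 + i, h1⟩ := by
          apply Fin.ext
          rw [hfval2 j hj.1 hj.2]
          show _ = a2 + i
          omega
        rw [e2, e1]
        exact (hB i hi h1 h2).symm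
    · intro h
      constructor
      · intro i hi h1 h2
        have hjmem : (⟨c1 + i, h2⟩ : Fin n) ∈ s := by rw [hmem]; left; constructor <;> simp [hi]
        have := h ⟨c1 + i, h2⟩ hjmem
        have e2 : f ⟨c1 + i, h2⟩ = ⟨a1 + i, h1⟩ := by
          apply Fin.ext
          rw [hfval1 ⟨c1 + i, h2⟩ (by simp) (by simp [hi])]
          show a1 + (c1 + i - c1) = a1 + i
          omega
        rw [e2] at this
        exact this.symm
      · intro i hi h1 h2
        have hjmem : (⟨c2 + i, h2⟩ : Fin n) ∈ s := by rw [hmem]; right; constructor <;> simp [hi]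
        have := h ⟨c2 + i, h2⟩ hjmem
        have e2 : f ⟨c2 + i, h2⟩ = ⟨a2 + i, h1⟩ := by
          apply Fin.ext
          rw [hfval2 ⟨c2 + i, h2⟩ (by simp) (by simp [hi])]
          show a2 + (c2 + i - c2) = a2 + i
          omega
        rw [e2] at this
        exact this.symm
  rw [Finset.filter_congr (fun σ _ => hiff σ), count_aux q n s f hf, hcard]

lemma ite_one_zero_mul (P Q : Prop) [dP : Decidable P] [dQ : Decidable Q]
    [dPQ : Decidable (P ∧ Q)] :
    (if P then (1:ℝ) else 0) * (if Q then (1:ℝ) else 0) = if P ∧ Q then (1:ℝ) else 0 := by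
  by_cases hp : P <;> by_cases hq : Q <;> simp [hp, hq]

/-- For i.i.d. uniform `σ : Fin n → Fin q` and two collections `Γ, Γ'` (given by
left endpoints) of `ℓ` pairwise disjoint length-`r` intervals each, all intervals of `Γ`
disjoint from those of `Γ'`, the number of matching pairs
`Z = Σ_{B ∈ Γ, B' ∈ Γ'} 1{σ|_B = σ|_{B'}}` satisfies `E Z = ℓ² q^{-r}` and
`E Z² ≤ E Z + ℓ⁴ q^{-2r}`. Expectations are sums over all `σ` divided by `q^n`. -/
theorem stmt1 (q r n ℓ : ℕ) (hq : 2 ≤ q) (hr : 1 ≤ r) (hn : 1 ≤ n)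
    (Γ Γ' : Finset ℕ) (hΓ : Γ.card = ℓ) (hΓ' : Γ'.card = ℓ)
    (hbound : ∀ b ∈ Γ ∪ Γ', b + r ≤ n)
    (hdisj : ∀ b ∈ Γ ∪ Γ', ∀ b'' ∈ Γ ∪ Γ', b ≠ b'' → (b + r ≤ b'' ∨ b'' + r ≤ b))
    (hcross : ∀ b ∈ Γ, b ∉ Γ')
    (Z : (Fin n → Fin q) → ℝ)
    (hZ : ∀ σ, Z σ = ∑ b ∈ Γ, ∑ b' ∈ Γ',
        (if ∀ i < r, ∀ (h1 : b + i < n) (h2 : b' + i < n),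
            σ ⟨b + i, h1⟩ = σ ⟨b' + i, h2⟩ then (1 : ℝ) else 0)) :
    (∑ σ : Fin n → Fin q, Z σ) / (q : ℝ) ^ n = (ℓ : ℝ) ^ 2 * (q : ℝ) ^ (-(r : ℤ)) ∧
    (∑ σ : Fin n → Fin q, (Z σ) ^ 2) / (q : ℝ) ^ n
      ≤ (∑ σ : Fin n → Fin q, Z σ) / (q : ℝ) ^ n + (ℓ : ℝ) ^ 4 * (q : ℝ) ^ (-(2 * r : ℤ)) := by
  have hq0 : (0:ℝ) < (q:ℝ) := by
    have : 0 < q := by omega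
    exact_mod_cast this
  rcases Nat.eq_zero_or_pos ℓ with h0 | hl
  · subst h0
    have hΓe : Γ = ∅ := Finset.card_eq_zero.mp hΓ
    have hZ0 : ∀ σ, Z σ = 0 := by intro σ; rw [hZ, hΓe]; simp
    simp [hZ0]
  -- main case
  obtain ⟨b0, hb0⟩ := Finset.card_pos.mp (by rw [hΓ]; exact hl)
  obtain ⟨b0', hb0'⟩ := Finset.card_pos.mp (by rw [hΓ']; exact hl)
  have hcr : ∀ x ∈ Γ, ∀ y ∈ Γ', x + r ≤ y ∨ y + r ≤ x := fun x hx y hy =>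
    hdisj x (Finset.mem_union_left _ hx) y (Finset.mem_union_right _ hy)
      (fun h => hcross x hx (h ▸ hy))
  have h2rn : 2 * r ≤ n := by
    have h1 := hbound b0 (Finset.mem_union_left _ hb0)
    have h2 := hbound b0' (Finset.mem_union_right _ hb0')
    have h3 := hcr b0 hb0 b0' hb0'
    omega
  have hrn : r ≤ n := by omega
  have hbΓ : ∀ x ∈ Γ, x + r ≤ n := fun x hx => hbound x (Finset.mem_union_left _ hx)
  have hbΓ' : ∀ y ∈ Γ', y + r ≤ n := fun y hy => hbound y (Finset.mem_union_right _ hy)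
  have hΓΓ : ∀ x ∈ Γ, ∀ y ∈ Γ, x ≠ y → x + r ≤ y ∨ y + r ≤ x := fun x hx y hy hne =>
    hdisj x (Finset.mem_union_left _ hx) y (Finset.mem_union_left _ hy) hne
  have hΓ'Γ' : ∀ x ∈ Γ', ∀ y ∈ Γ', x ≠ y → x + r ≤ y ∨ y + r ≤ x := fun x hx y hy hne =>
    hdisj x (Finset.mem_union_right _ hx) y (Finset.mem_union_right _ hy) hne
  -- first moment
  have key1 : ∀ b ∈ Γ, ∀ b' ∈ Γ',
      (∑ σ : Fin n → Fin q, (if ∀ i < r, ∀ (h1 : b + i < n) (h2 : b' + i < n),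
          σ ⟨b + i, h1⟩ = σ ⟨b' + i, h2⟩ then (1:ℝ) else 0)) = (q:ℝ) ^ (n - r) := by
    intro b hb b' hb'
    rw [Finset.sum_boole, count_one q r n b b' (hbΓ b hb) (hbΓ' b' hb') (hcr b hb b' hb')]
    push_cast
    ring
  have hS1 : (∑ σ : Fin n → Fin q, Z σ) = (ℓ:ℝ)^2 * (q:ℝ)^(n-r) := by
    simp only [hZ]
    rw [Finset.sum_comm]
    rw [Finset.sum_congr rfl (fun b _ => Finset.sum_comm)]
    rw [Finset.sum_congr rfl (fun b hb => Finset.sum_congr rfl (fun b' hb' => key1 b hb b' hb'))]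
    rw [Finset.sum_const, Finset.sum_const, hΓ, hΓ']
    push_cast
    ring
  have hpown : ((q:ℝ))^n ≠ 0 := by positivity
  have hpow1 : ((q:ℝ))^(n-r) / (q:ℝ)^n = (q:ℝ) ^ (-(r:ℤ)) := by
    rw [zpow_neg, zpow_natCast, div_eq_iff hpown, inv_mul_eq_div, eq_div_iff (by positivity),
      ← pow_add]
    congr 1
    omega
  have hpow2 : ((q:ℝ))^(n-2*r) / (q:ℝ)^n = (q:ℝ) ^ (-(2*(r:ℤ))) := by
    have : (2 * (r:ℤ)) = ((2*r : ℕ) : ℤ) := by push_cast; ring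
    rw [this, zpow_neg, zpow_natCast, div_eq_iff hpown, inv_mul_eq_div,
      eq_div_iff (by positivity), ← pow_add]
    congr 1
    omega
  have conc1 : (∑ σ : Fin n → Fin q, Z σ) / (q : ℝ) ^ n = (ℓ : ℝ) ^ 2 * (q : ℝ) ^ (-(r : ℤ)) := by
    rw [hS1, mul_div_assoc, hpow1]
  refine ⟨conc1, ?_⟩
  -- second moment
  set S : Finset (ℕ × ℕ) := Γ ×ˢ Γ' with hSdef
  set X : ℕ → ℕ → (Fin n → Fin q) → ℝ := fun b b' σ =>
    if ∀ i < r, ∀ (h1 : b + i < n) (h2 : b' + i < n),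
        σ ⟨b + i, h1⟩ = σ ⟨b' + i, h2⟩ then (1:ℝ) else 0 with hXdef
  have hZ' : ∀ σ, Z σ = ∑ p ∈ S, X p.1 p.2 σ := by
    intro σ
    rw [hZ σ, hSdef, Finset.sum_product]
  have hXmul : ∀ b1 b1' b2 b2' σ, X b1 b1' σ * X b2 b2' σ =
      if ((∀ i < r, ∀ (h1 : b1 + i < n) (h2 : b1' + i < n),
            σ ⟨b1 + i, h1⟩ = σ ⟨b1' + i, h2⟩) ∧
          (∀ i < r, ∀ (h1 : b2 + i < n) (h2 : b2' + i < n),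
            σ ⟨b2 + i, h1⟩ = σ ⟨b2' + i, h2⟩)) then (1:ℝ) else 0 := by
    intro b1 b1' b2 b2' σ
    simp only [hXdef]
    exact ite_one_zero_mul _ _
  have key2 : ∀ p ∈ S, ∀ p' ∈ S,
      (∑ σ : Fin n → Fin q, X p.1 p.2 σ * X p'.1 p'.2 σ)
        = if p = p' then (q:ℝ)^(n-r) else (q:ℝ)^(n-2*r) := by
    rintro ⟨b1, b1'⟩ hp ⟨b2, b2'⟩ hp'
    rw [Finset.mem_product] at hp hp'
    obtain ⟨hb1, hb1'⟩ := hp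
    obtain ⟨hb2, hb2'⟩ := hp'
    simp only
    rw [Finset.sum_congr rfl (fun σ _ => hXmul b1 b1' b2 b2' σ), Finset.sum_boole]
    by_cases he : (b1, b1') = (b2, b2')
    · have e1 : b1 = b2 := congrArg Prod.fst he
      have e2 : b1' = b2' := congrArg Prod.snd he
      subst e1
      subst e2
      rw [if_pos rfl]
      rw [Finset.filter_congr (fun σ _ => and_self_iff)]
      rw [count_one q r n b1 b1' (hbΓ b1 hb1) (hbΓ' b1' hb1') (hcr b1 hb1 b1' hb1')]
      push_cast
      ring
    · rw [if_neg he]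
      by_cases hc : b1' = b2'
      · have hbne : b1 ≠ b2 := by
          intro h; exact he (by rw [h, hc])
        subst hc
        have hflip : ∀ σ : Fin n → Fin q,
            (((∀ i < r, ∀ (h1 : b1 + i < n) (h2 : b1' + i < n),
                σ ⟨b1 + i, h1⟩ = σ ⟨b1' + i, h2⟩) ∧
              (∀ i < r, ∀ (h1 : b2 + i < n) (h2 : b1' + i < n),
                σ ⟨b2 + i, h1⟩ = σ ⟨b1' + i, h2⟩))) ↔
            (((∀ i < r, ∀ (h1 : b1' + i < n) (h2 : b1 + i < n),
                σ ⟨b1' + i, h1⟩ = σ ⟨b1 + i, h2⟩) ∧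
              (∀ i < r, ∀ (h1 : b1' + i < n) (h2 : b2 + i < n),
                σ ⟨b1' + i, h1⟩ = σ ⟨b2 + i, h2⟩))) := by
          intro σ
          constructor <;> rintro ⟨u, v⟩ <;>
            exact ⟨fun i hi ha hb => (u i hi hb ha).symm, fun i hi ha hb => (v i hi hb ha).symm⟩
        rw [Finset.filter_congr (fun σ _ => hflip σ),
          count_two q r n b1' b1 b1' b2 (hbΓ' b1' hb1') (hbΓ b1 hb1) (hbΓ' b1' hb1')
            (hbΓ b2 hb2) ((hcr b1 hb1 b1' hb1').symm) ((hcr b2 hb2 b1' hb1').symm)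
            ((hcr b1 hb1 b1' hb1').symm) ((hcr b2 hb2 b1' hb1').symm)
            (hΓΓ b1 hb1 b2 hb2 hbne)]
        push_cast
        ring
      · rw [count_two q r n b1 b1' b2 b2' (hbΓ b1 hb1) (hbΓ' b1' hb1') (hbΓ b2 hb2)
          (hbΓ' b2' hb2') (hcr b1 hb1 b1' hb1') (hcr b1 hb1 b2' hb2')
          (hcr b2 hb2 b1' hb1') (hcr b2 hb2 b2' hb2') (hΓ'Γ' b1' hb1' b2' hb2' hc)]
        push_cast
        ring
  have hScard : S.card = ℓ^2 := by
    rw [hSdef, Finset.card_product, hΓ, hΓ']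
    ring
  have hS2 : (∑ σ : Fin n → Fin q, (Z σ)^2)
      = (ℓ:ℝ)^2 * ((q:ℝ)^(n-r) + ((ℓ:ℝ)^2 - 1) * (q:ℝ)^(n-2*r)) := by
    have step1 : (∑ σ : Fin n → Fin q, (Z σ)^2)
        = ∑ p ∈ S, ∑ p' ∈ S, ∑ σ : Fin n → Fin q, X p.1 p.2 σ * X p'.1 p'.2 σ := by
      have e : ∀ σ, (Z σ)^2 = ∑ p ∈ S, ∑ p' ∈ S, X p.1 p.2 σ * X p'.1 p'.2 σ := by
        intro σ; rw [hZ' σ, sq, Finset.sum_mul_sum]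
      calc (∑ σ : Fin n → Fin q, (Z σ)^2)
          = ∑ σ : Fin n → Fin q, ∑ p ∈ S, ∑ p' ∈ S, X p.1 p.2 σ * X p'.1 p'.2 σ :=
            Finset.sum_congr rfl (fun σ _ => e σ)
        _ = ∑ p ∈ S, ∑ σ : Fin n → Fin q, ∑ p' ∈ S, X p.1 p.2 σ * X p'.1 p'.2 σ :=
            Finset.sum_comm
        _ = ∑ p ∈ S, ∑ p' ∈ S, ∑ σ : Fin n → Fin q, X p.1 p.2 σ * X p'.1 p'.2 σ :=
            Finset.sum_congr rfl (fun p _ => Finset.sum_comm)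
    rw [step1]
    rw [Finset.sum_congr rfl (fun p hp => Finset.sum_congr rfl (fun p' hp' => key2 p hp p' hp'))]
    have inner : ∀ p ∈ S, (∑ p' ∈ S, if p = p' then (q:ℝ)^(n-r) else (q:ℝ)^(n-2*r))
        = (q:ℝ)^(n-r) + ((ℓ:ℝ)^2 - 1) * (q:ℝ)^(n-2*r) := by
      intro p hp
      rw [← Finset.add_sum_erase S _ hp, if_pos rfl]
      congr 1
      rw [Finset.sum_congr rfl
        (fun p' hp' => if_neg (fun h => (Finset.ne_of_mem_erase hp') h.symm))]
      rw [Finset.sum_const, Finset.card_erase_of_mem hp, hScard, nsmul_eq_mul]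
      have hone : 1 ≤ ℓ^2 := Nat.one_le_pow _ _ hl
      push_cast [Nat.cast_sub hone]
      ring
    rw [Finset.sum_congr rfl inner, Finset.sum_const, hScard]
    push_cast
    ring
  rw [conc1, hS2]
  have e1 : ((ℓ:ℝ)^2 * ((q:ℝ)^(n-r) + ((ℓ:ℝ)^2 - 1) * (q:ℝ)^(n-2*r))) / (q:ℝ)^n
      = (ℓ:ℝ)^2 * ((q:ℝ)^(n-r)/(q:ℝ)^n) + ((ℓ:ℝ)^2 * ((ℓ:ℝ)^2 - 1)) * ((q:ℝ)^(n-2*r)/(q:ℝ)^n) := by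
    field_simp
  rw [e1, hpow1, hpow2]
  have hl1 : (1:ℝ) ≤ (ℓ:ℝ) := by exact_mod_cast hl
  have hz : (0:ℝ) < (q:ℝ) ^ (-(2*(r:ℤ))) := by positivity
  have : (2 * r : ℤ) = 2 * (r:ℤ) := by push_cast; ring
  rw [this]
  nlinarith [sq_nonneg ((ℓ:ℝ))]
end

section
/- Let q ≥ 2, d ≥ 2, r, n positive integers. Let σ : Λ_n → Fin q be i.i.d. uniform. For a fixed 2r-box B ⊆ Λ_n, the probability that some (r-1)-sub-box B' ⊆ B fails to be unique (i.e., there exists another (r-1)-box B'' ⊆ Λ_n with σ|_{B'} = σ|_{B''}) is at most (r+2)^d · n^d · q^{-(r-1)^d}. -/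
/-- Matching predicate: σ agrees on the s-box at corner a and the s-box at corner a'. -/
def stmt10M (n q s : ℕ) {d : ℕ} (a a' : Fin d → ℕ) (σ : (Fin d → Fin n) → Fin q) : Prop :=
  ∀ x : Fin d → ℕ, (∀ i, x i < s) →
    ∀ (h1 : ∀ i, a i + x i < n) (h2 : ∀ i, a' i + x i < n),
      σ (fun i => ⟨a i + x i, h1 i⟩) = σ (fun i => ⟨a' i + x i, h2 i⟩)

lemma stmt10M_symm {n q s d : ℕ} {a a' : Fin d → ℕ} {σ : (Fin d → Fin n) → Fin q} :
    stmt10M n q s a a' σ ↔ stmt10M n q s a' a σ := by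
  constructor <;> intro h x hx h1 h2 <;> exact (h x hx h2 h1).symm

lemma stmt10L_inj {d n : ℕ} {u v : Fin d → ℕ} (hu : ∀ i, u i < n) (hv : ∀ i, v i < n)
    (h : ∑ i, u i * n ^ (i : ℕ) = ∑ i, v i * n ^ (i : ℕ)) : u = v := by
  have h2 : finFunctionFinEquiv (fun i => (⟨u i, hu i⟩ : Fin n)) =
      finFunctionFinEquiv (fun i => (⟨v i, hv i⟩ : Fin n)) := by
    apply Fin.ext
    simpa [finFunctionFinEquiv_apply] using h
  funext i
  exact congrArg Fin.val (congrFun (finFunctionFinEquiv.injective h2) i)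

/-- Directed counting lemma. -/
lemma stmt10count_dir {d n q s : ℕ} (a a' : Fin d → ℕ)
    (ha : ∀ i, a i + s ≤ n) (ha' : ∀ i, a' i + s ≤ n)
    (hlt : ∑ i, a i * n ^ (i : ℕ) < ∑ i, a' i * n ^ (i : ℕ)) :
    Nat.card {σ : (Fin d → Fin n) → Fin q // stmt10M n q s a a' σ} ≤ q ^ (n ^ d - s ^ d) := by
  classical
  set g : (Fin d → Fin s) → (Fin d → Fin n) :=
    fun x i => ⟨a' i + x i, by have := (x i).2; have := ha' i; omega⟩ with hg_def
  have hg : Function.Injective g := by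
    intro x y hxy
    funext i
    have h := congrArg (fun f => ((f i : Fin n) : ℕ)) hxy
    simp only [hg_def] at h
    exact Fin.ext (by omega)
  set T : Finset (Fin d → Fin n) := Finset.image g Finset.univ with hT_def
  have key : ∀ σ τ : (Fin d → Fin n) → Fin q, stmt10M n q s a a' σ → stmt10M n q s a a' τ →
      (∀ p ∉ T, σ p = τ p) → ∀ m (p : Fin d → Fin n),
        (∑ i, ((p i : ℕ)) * n ^ (i : ℕ)) = m → σ p = τ p := by
    intro σ τ hσ hτ hagree m
    induction m using Nat.strong_induction_on with
    | _ m IH =>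
      intro p hp
      by_cases hpT : p ∈ T
      · obtain ⟨x, -, hx⟩ := Finset.mem_image.1 hpT
        have hxb : ∀ i, (x i : ℕ) < s := fun i => (x i).2
        have h1 : ∀ i, a i + (x i : ℕ) < n := fun i => by have := ha i; have := hxb i; omega
        have h2 : ∀ i, a' i + (x i : ℕ) < n := fun i => by have := ha' i; have := hxb i; omega
        have e1 := hσ (fun i => (x i : ℕ)) hxb h1 h2
        have e2 := hτ (fun i => (x i : ℕ)) hxb h1 h2
        have hpe : p = fun i => (⟨a' i + (x i : ℕ), h2 i⟩ : Fin n) := by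
          rw [← hx]
        have hlt' : (∑ i, (((fun i => (⟨a i + (x i : ℕ), h1 i⟩ : Fin n)) i : ℕ)) * n ^ (i : ℕ)) < m := by
          rw [← hp, hpe]
          simp only
          calc ∑ i, (a i + (x i : ℕ)) * n ^ (i : ℕ)
              = (∑ i, a i * n ^ (i : ℕ)) + ∑ i, (x i : ℕ) * n ^ (i : ℕ) := by
                rw [← Finset.sum_add_distrib]; exact Finset.sum_congr rfl fun i _ => by ring
            _ < (∑ i, a' i * n ^ (i : ℕ)) + ∑ i, (x i : ℕ) * n ^ (i : ℕ) := by omega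
            _ = ∑ i, (a' i + (x i : ℕ)) * n ^ (i : ℕ) := by
                rw [← Finset.sum_add_distrib]; exact Finset.sum_congr rfl fun i _ => by ring
        have hIH := IH _ hlt' (fun i => (⟨a i + (x i : ℕ), h1 i⟩ : Fin n)) rfl
        rw [hpe, ← e1, ← e2, hIH]
      · exact hagree p hpT
  let Φ : {σ : (Fin d → Fin n) → Fin q // stmt10M n q s a a' σ} →
      ({p : Fin d → Fin n // p ∉ T} → Fin q) := fun σ p => σ.1 p.1
  have hΦ : Function.Injective Φ := by
    intro σ τ h
    apply Subtype.ext
    funext p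
    exact key σ.1 τ.1 σ.2 τ.2 (fun p hp => congrFun h ⟨p, hp⟩) _ p rfl
  have hcardT : T.card = s ^ d := by
    rw [hT_def, Finset.card_image_of_injective _ hg, Finset.card_univ, Fintype.card_fun,
      Fintype.card_fin, Fintype.card_fin]
  calc Nat.card {σ : (Fin d → Fin n) → Fin q // stmt10M n q s a a' σ}
      ≤ Nat.card ({p : Fin d → Fin n // p ∉ T} → Fin q) := Nat.card_le_card_of_injective Φ hΦ
    _ = q ^ (n ^ d - s ^ d) := by
        rw [Nat.card_eq_fintype_card, Fintype.card_fun, Fintype.card_fin]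
        congr 1
        rw [Fintype.card_subtype_compl, Fintype.card_fun, Fintype.card_fin, Fintype.card_fin]
        simp [hcardT]
lemma stmt10count {d n q s : ℕ} (a a' : Fin d → ℕ) (hs : 0 < s)
    (ha : ∀ i, a i + s ≤ n) (ha' : ∀ i, a' i + s ≤ n) (hne : a ≠ a') :
    Nat.card {σ : (Fin d → Fin n) → Fin q // stmt10M n q s a a' σ} ≤ q ^ (n ^ d - s ^ d) := by
  have hLne : (∑ i, a i * n ^ (i : ℕ)) ≠ ∑ i, a' i * n ^ (i : ℕ) := by
    intro h
    exact hne (stmt10L_inj (fun i => by have := ha i; omega) (fun i => by have := ha' i; omega) h)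
  rcases hLne.lt_or_gt with h | h
  · exact stmt10count_dir a a' ha ha' h
  · calc Nat.card {σ : (Fin d → Fin n) → Fin q // stmt10M n q s a a' σ}
        = Nat.card {σ : (Fin d → Fin n) → Fin q // stmt10M n q s a' a σ} :=
          Nat.card_congr (Equiv.subtypeEquivRight fun σ => stmt10M_symm)
      _ ≤ q ^ (n ^ d - s ^ d) := stmt10count_dir a' a ha' ha h

/-- For a fixed `2r`-box `B ⊆ Λ_n` (corner `c`), the probability that some
`(r-1)`-sub-box of `B` fails to be unique among `(r-1)`-boxes of `Λ_n` is at most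
`(r+2)^d · n^d · q^{-(r-1)^d}`. -/
theorem stmt10 (q d r n : ℕ) (hq : 2 ≤ q) (hd : 2 ≤ d) (hr : 0 < r)
    (c : Fin d → ℕ) (hc : ∀ i, c i + 2 * r ≤ n) :
    (Nat.card {σ : (Fin d → Fin n) → Fin q //
        ∃ a : Fin d → ℕ, (∀ i, c i ≤ a i ∧ a i + (r - 1) ≤ c i + 2 * r) ∧
          ∃ a' : Fin d → ℕ, a' ≠ a ∧ (∀ i, a' i + (r - 1) ≤ n) ∧
            ∀ x : Fin d → ℕ, (∀ i, x i < r - 1) →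
              ∀ (h1 : ∀ i, a i + x i < n) (h2 : ∀ i, a' i + x i < n),
                σ (fun i => ⟨a i + x i, h1 i⟩) = σ (fun i => ⟨a' i + x i, h2 i⟩)} : ℝ)
      / (q : ℝ) ^ (n ^ d)
      ≤ (r + 2 : ℝ) ^ d * (n : ℝ) ^ d * (q : ℝ) ^ (-((r - 1 : ℕ) ^ d : ℤ)) := by
  classical
  have hq0 : 0 < q := by omega
  have hn2 : 2 ≤ n := by have := hc ⟨0, by omega⟩; omega
  have hqR : (0:ℝ) < (q : ℝ) ^ (n ^ d) := by positivity
  -- rewrite the subtype using stmt10M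
  show (Nat.card {σ : (Fin d → Fin n) → Fin q //
        ∃ a : Fin d → ℕ, (∀ i, c i ≤ a i ∧ a i + (r - 1) ≤ c i + 2 * r) ∧
          ∃ a' : Fin d → ℕ, a' ≠ a ∧ (∀ i, a' i + (r - 1) ≤ n) ∧
            stmt10M n q (r - 1) a a' σ} : ℝ) / (q : ℝ) ^ (n ^ d)
      ≤ (r + 2 : ℝ) ^ d * (n : ℝ) ^ d * (q : ℝ) ^ (-((r - 1 : ℕ) ^ d : ℤ))
  set s : ℕ := r - 1 with hs_def
  set P : ((Fin d → Fin n) → Fin q) → Prop := fun σ =>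
    ∃ a : Fin d → ℕ, (∀ i, c i ≤ a i ∧ a i + s ≤ c i + 2 * r) ∧
      ∃ a' : Fin d → ℕ, a' ≠ a ∧ (∀ i, a' i + s ≤ n) ∧ stmt10M n q s a a' σ with hP_def
  by_cases hr1 : r = 1
  · -- degenerate case: bound probability by 1
    have hs0 : s = 0 := by omega
    have hle : Nat.card {σ : (Fin d → Fin n) → Fin q // P σ} ≤ q ^ (n ^ d) := by
      have h2 := Nat.card_le_card_of_injective
        (Subtype.val (p := P)) Subtype.val_injective
      rwa [Nat.card_eq_fintype_card (α := (Fin d → Fin n) → Fin q), Fintype.card_fun,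
        Fintype.card_fun, Fintype.card_fin, Fintype.card_fin, Fintype.card_fin] at h2
    have hz : (-((s : ℤ)) ^ d) = 0 ∨ True := Or.inr trivial
    have hexp : (-((s : ℤ) ^ d)) = 0 := by
      rw [hs0]; simp [zero_pow (by omega : d ≠ 0)]
    rw [hexp, zpow_zero, mul_one]
    have step1 : (Nat.card {σ : (Fin d → Fin n) → Fin q // P σ} : ℝ) / (q : ℝ) ^ (n ^ d) ≤ 1 := by
      rw [div_le_one hqR]
      exact_mod_cast hle
    refine step1.trans ?_
    have h1 : (1:ℝ) ≤ ((r:ℝ) + 2) ^ d :=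
      one_le_pow₀ (by have : (0:ℝ) ≤ (r:ℝ) := Nat.cast_nonneg r; linarith)
    have h2 : (1:ℝ) ≤ ((n:ℝ)) ^ d := one_le_pow₀ (by exact_mod_cast Nat.one_le_of_lt hn2)
    nlinarith
  · -- main case r ≥ 2
    have hr2 : 2 ≤ r := by omega
    have hs1 : 1 ≤ s := by omega
    have hsr : s = r - 1 := hs_def
    -- pair predicate
    set Q : ((Fin d → Fin (r + 2)) × (Fin d → Fin n)) → ((Fin d → Fin n) → Fin q) → Prop :=
      fun uv σ =>
        (fun i => ((uv.2 i : ℕ))) ≠ (fun i => c i + (uv.1 i : ℕ)) ∧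
        (∀ i, (uv.2 i : ℕ) + s ≤ n) ∧
        stmt10M n q s (fun i => c i + (uv.1 i : ℕ)) (fun i => ((uv.2 i : ℕ))) σ with hQ_def
    have hsub : Finset.filter P Finset.univ ⊆
        Finset.biUnion Finset.univ
          (fun uv : (Fin d → Fin (r + 2)) × (Fin d → Fin n) =>
            Finset.filter (Q uv) Finset.univ) := by
      intro σ hσ
      rw [Finset.mem_filter] at hσ
      obtain ⟨-, a, hA, a', hne, hbnd, hm⟩ := hσ
      rw [Finset.mem_biUnion]
      refine ⟨(fun i => ⟨a i - c i, by have := (hA i).1; have := (hA i).2; omega⟩,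
              fun i => ⟨a' i, by have := hbnd i; omega⟩), Finset.mem_univ _, ?_⟩
      rw [Finset.mem_filter]
      have hfa : (fun i : Fin d => c i + (a i - c i)) = a :=
        funext fun i => by have := (hA i).1; omega
      refine ⟨Finset.mem_univ _, ?_, fun i => hbnd i, ?_⟩
      · show a' ≠ (fun i : Fin d => c i + (a i - c i))
        rw [hfa]; exact hne
      · show stmt10M n q s (fun i : Fin d => c i + (a i - c i)) a' σ
        rw [hfa]; exact hm
    have hpair : ∀ uv : (Fin d → Fin (r + 2)) × (Fin d → Fin n),
        (Finset.filter (Q uv) Finset.univ).card ≤ q ^ (n ^ d - s ^ d) := by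
      intro uv
      by_cases hgood : (fun i => ((uv.2 i : ℕ))) ≠ (fun i => c i + (uv.1 i : ℕ)) ∧
          (∀ i, (uv.2 i : ℕ) + s ≤ n)
      · obtain ⟨hne, hbnd⟩ := hgood
        have ha : ∀ i, (c i + (uv.1 i : ℕ)) + s ≤ n := fun i => by
          have := hc i; have := (uv.1 i).2; omega
        calc (Finset.filter (Q uv) Finset.univ).card
            ≤ (Finset.filter
                (fun σ => stmt10M n q s (fun i => c i + (uv.1 i : ℕ))
                  (fun i => ((uv.2 i : ℕ))) σ) Finset.univ).card := by
              apply Finset.card_le_card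
              intro σ hσ
              rw [Finset.mem_filter] at *
              exact ⟨hσ.1, hσ.2.2.2⟩
          _ = Nat.card {σ : (Fin d → Fin n) → Fin q //
                stmt10M n q s (fun i => c i + (uv.1 i : ℕ)) (fun i => ((uv.2 i : ℕ))) σ} := by
              rw [Nat.card_eq_fintype_card, Fintype.card_subtype]
          _ ≤ q ^ (n ^ d - s ^ d) :=
              stmt10count _ _ hs1 ha hbnd (Ne.symm hne)
      · have hempty : Finset.filter (Q uv) Finset.univ = ∅ := by
          rw [Finset.filter_eq_empty_iff]
          intro σ _
          intro hQ
          exact hgood ⟨hQ.1, hQ.2.1⟩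
        rw [hempty]
        simp
    have hmain : Nat.card {σ : (Fin d → Fin n) → Fin q // P σ}
        ≤ (r + 2) ^ d * n ^ d * q ^ (n ^ d - s ^ d) := by
      calc Nat.card {σ : (Fin d → Fin n) → Fin q // P σ}
          = (Finset.filter P Finset.univ).card := by
            rw [Nat.card_eq_fintype_card, Fintype.card_subtype]
        _ ≤ (Finset.biUnion Finset.univ
              (fun uv : (Fin d → Fin (r + 2)) × (Fin d → Fin n) =>
                Finset.filter (Q uv) Finset.univ)).card := Finset.card_le_card hsub
        _ ≤ ∑ uv : (Fin d → Fin (r + 2)) × (Fin d → Fin n),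
              (Finset.filter (Q uv) Finset.univ).card := Finset.card_biUnion_le
        _ ≤ ∑ _uv : (Fin d → Fin (r + 2)) × (Fin d → Fin n), q ^ (n ^ d - s ^ d) :=
              Finset.sum_le_sum fun uv _ => hpair uv
        _ = (r + 2) ^ d * n ^ d * q ^ (n ^ d - s ^ d) := by
            rw [Finset.sum_const, Finset.card_univ, Fintype.card_prod, Fintype.card_fun,
              Fintype.card_fun, Fintype.card_fin, Fintype.card_fin, Fintype.card_fin,
              smul_eq_mul, mul_assoc]
    -- real arithmetic
    have hsn : s ≤ n := by have := hc ⟨0, by omega⟩; omega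
    have hsd : s ^ d ≤ n ^ d := Nat.pow_le_pow_left hsn d
    have key2 : (q:ℝ) ^ (n ^ d - s ^ d) / (q:ℝ) ^ (n ^ d) = ((q:ℝ) ^ (s ^ d))⁻¹ := by
      calc (q:ℝ) ^ (n ^ d - s ^ d) / (q:ℝ) ^ (n ^ d)
          = (q:ℝ) ^ (n ^ d - s ^ d) / ((q:ℝ) ^ (n ^ d - s ^ d) * (q:ℝ) ^ (s ^ d)) := by
            rw [← pow_add, Nat.sub_add_cancel hsd]
        _ = ((q:ℝ) ^ (s ^ d))⁻¹ := by
            rw [div_mul_eq_div_div, div_self (by positivity), one_div]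
    have hexp : (q:ℝ) ^ (-((s : ℤ) ^ d)) = ((q:ℝ) ^ (s ^ d))⁻¹ := by
      rw [← Nat.cast_pow, zpow_neg, zpow_natCast]
    have hmainR : (Nat.card {σ : (Fin d → Fin n) → Fin q // P σ} : ℝ)
        ≤ ((r:ℝ) + 2) ^ d * (n : ℝ) ^ d * (q:ℝ) ^ (n ^ d - s ^ d) := by
      calc (Nat.card {σ : (Fin d → Fin n) → Fin q // P σ} : ℝ)
          ≤ (((r + 2) ^ d * n ^ d * q ^ (n ^ d - s ^ d) : ℕ) : ℝ) := Nat.cast_le.mpr hmain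
        _ = ((r:ℝ) + 2) ^ d * (n : ℝ) ^ d * (q:ℝ) ^ (n ^ d - s ^ d) := by push_cast; ring
    calc (Nat.card {σ : (Fin d → Fin n) → Fin q // P σ} : ℝ) / (q : ℝ) ^ (n ^ d)
        ≤ (((r:ℝ) + 2) ^ d * (n : ℝ) ^ d * (q:ℝ) ^ (n ^ d - s ^ d)) / (q : ℝ) ^ (n ^ d) := by
          gcongr
      _ = (r + 2 : ℝ) ^ d * (n : ℝ) ^ d * ((q:ℝ) ^ (n ^ d - s ^ d) / (q : ℝ) ^ (n ^ d)) := by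
          ring
      _ = (r + 2 : ℝ) ^ d * (n : ℝ) ^ d * (q : ℝ) ^ (-((s:ℤ) ^ d)) := by
          rw [key2, hexp]
end

section
/- Let q ≥ 2, d ≥ 2, r ≥ 2, and let σ : Λ_n → Fin q be i.i.d. uniform on Λ_n = {0,...,n-1}^d. Fix (r-1)-boxes A, A', B, B' ⊆ Λ_n with A ∩ B ≠ ∅, A' ∩ B' ≠ ∅, min_{u∈A, u'∈A'} |u - u'|_∞ > 4r, and v_{A,A'} ≠ v_{B,B'}. Then P(σ|_A = σ|_{A'} and σ|_B = σ|_{B'}) = q^{-2(r-1)^d}. -/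
/-- Membership in the `(r-1)`-box of `Λ_n` with smallest corner `a : Fin d → ℕ`. -/
def inBox (d r : ℕ) (a x : Fin d → ℕ) : Prop :=
  ∀ i, a i ≤ x i ∧ x i < a i + (r - 1)

private def extendFun {Ω : Type} [DecidableEq Ω] {q : ℕ} (D : Finset Ω)
    (pred : Ω → Ω) (ψ : Ω → ℕ) (hψ : ∀ u ∈ D, ψ (pred u) < ψ u)
    (τ : {u : Ω // u ∉ D} → Fin q) (u : Ω) : Fin q :=
  if h : u ∈ D then extendFun D pred ψ hψ τ (pred u) else τ ⟨u, h⟩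
termination_by ψ u
decreasing_by exact hψ u h

private lemma count_triangular {Ω : Type} [Fintype Ω] [DecidableEq Ω] (q : ℕ)
    (D : Finset Ω) (pred : Ω → Ω) (ψ : Ω → ℕ)
    (hψ : ∀ u ∈ D, ψ (pred u) < ψ u) :
    Nat.card {σ : Ω → Fin q // ∀ u ∈ D, σ u = σ (pred u)}
      = q ^ (Fintype.card Ω - D.card) := by
  have ext_eq : ∀ (σ : Ω → Fin q), (∀ u ∈ D, σ u = σ (pred u)) →
      ∀ u, extendFun D pred ψ hψ (fun v => σ v.1) u = σ u := by
    intro σ hσ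
    have key : ∀ N u, ψ u < N → extendFun D pred ψ hψ (fun v => σ v.1) u = σ u := by
      intro N
      induction N with
      | zero => intro u h; omega
      | succ N ih =>
        intro u h
        by_cases hu : u ∈ D
        · rw [extendFun, dif_pos hu, ih _ (by have := hψ u hu; omega), ← hσ u hu]
        · rw [extendFun, dif_neg hu]
    exact fun u => key (ψ u + 1) u (by omega)
  have e : {σ : Ω → Fin q // ∀ u ∈ D, σ u = σ (pred u)} ≃ ({u : Ω // u ∉ D} → Fin q) :=
    { toFun := fun σ u => σ.1 u.1
      invFun := fun τ => ⟨extendFun D pred ψ hψ τ, by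
        intro u hu
        conv_lhs => rw [extendFun]
        rw [dif_pos hu]⟩
      left_inv := by
        intro σ
        apply Subtype.ext
        funext u
        exact ext_eq σ.1 σ.2 u
      right_inv := by
        intro τ
        funext u
        show extendFun D pred ψ hψ τ u.1 = τ u
        conv_lhs => rw [extendFun]
        rw [dif_neg u.2] }
  rw [Nat.card_congr e]
  simp [Nat.card_eq_fintype_card, Fintype.card_fun, Fintype.card_subtype_compl]

private def boxF (d r n : ℕ) (c : Fin d → ℕ) : Finset (Fin d → Fin n) :=
  Finset.univ.filter (fun u => ∀ i, c i ≤ (u i : ℕ) ∧ (u i : ℕ) < c i + (r - 1))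

private lemma mem_boxF {d r n : ℕ} {c : Fin d → ℕ} {u : Fin d → Fin n} :
    u ∈ boxF d r n c ↔ ∀ i, c i ≤ (u i : ℕ) ∧ (u i : ℕ) < c i + (r - 1) := by
  simp [boxF]

private lemma inBox_of_mem {d r n : ℕ} {c : Fin d → ℕ} {u : Fin d → Fin n}
    (h : u ∈ boxF d r n c) : inBox d r c (fun i => (u i : ℕ)) :=
  fun i => mem_boxF.mp h i

private lemma card_boxF {d : ℕ} (r n : ℕ) (hr : 2 ≤ r) (c : Fin d → ℕ)
    (hc : ∀ i, c i + (r - 1) ≤ n) : (boxF d r n c).card = (r - 1) ^ d := by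
  have hr1 : 0 < r - 1 := by omega
  have key : (boxF d r n c).card = (Finset.univ : Finset (Fin d → Fin (r - 1))).card := by
    refine Finset.card_nbij'
      (fun u j => ⟨((u j : ℕ) - c j) % (r - 1), Nat.mod_lt _ hr1⟩)
      (fun x j => ⟨c j + (x j : ℕ), by have := (x j).isLt; have := hc j; omega⟩)
      ?_ ?_ ?_ ?_
    · intro u hu; exact Finset.mem_univ _
    · intro x hx
      exact mem_boxF.mpr (fun i => ⟨Nat.le_add_right _ _, by have := (x i).isLt; simp⟩)
    · intro u hu
      funext i
      have h := mem_boxF.mp hu i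
      exact Fin.ext (by simp [Nat.mod_eq_of_lt (by omega : (u i : ℕ) - c i < r - 1)]; omega)
    · intro x hx
      funext i
      have := (x i).isLt
      exact Fin.ext (by simp [Nat.mod_eq_of_lt this])
  rw [key, Finset.card_univ]
  simp [Fintype.card_fun]

private def predFun (d r n : ℕ) (a a' b b' : Fin d → ℕ)
    (haΛ : ∀ i, a i + (r - 1) ≤ n) (hb'Λ : ∀ i, b' i + (r - 1) ≤ n)
    (u : Fin d → Fin n) : Fin d → Fin n :=
  if h : u ∈ boxF d r n a' then
    fun i => ⟨(u i : ℕ) - a' i + a i, by have := mem_boxF.mp h i; have := haΛ i; omega⟩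
  else if h : u ∈ boxF d r n b then
    fun i => ⟨(u i : ℕ) - b i + b' i, by have := mem_boxF.mp h i; have := hb'Λ i; omega⟩
  else u

private def psiFun (d r n : ℕ) (a a' b b' : Fin d → ℕ) (i0 : Fin d)
    (u : Fin d → Fin n) : ℕ :=
  (2 * ((u i0 : ℕ) : ℤ) + 2 * n +
    (if u ∈ boxF d r n a' ∪ boxF d r n b' then
      ((a i0 : ℤ) - a' i0) + ((b i0 : ℤ) - b' i0) else 0)).toNat

private lemma main_count (q d r n : ℕ) (hr : 2 ≤ r)
    (a a' b b' : Fin d → ℕ)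
    (haΛ : ∀ i, a i + (r - 1) ≤ n) (ha'Λ : ∀ i, a' i + (r - 1) ≤ n)
    (hbΛ : ∀ i, b i + (r - 1) ≤ n) (hb'Λ : ∀ i, b' i + (r - 1) ≤ n)
    (hdisj : ∀ x : Fin d → ℕ, (inBox d r a x ∨ inBox d r b x) →
      (inBox d r a' x ∨ inBox d r b' x) → False)
    (i0 : Fin d) (hlt : (b' i0 : ℤ) - b i0 < (a' i0 : ℤ) - a i0) :
    Nat.card {σ : (Fin d → Fin n) → Fin q //
        (∀ x : Fin d → ℕ, (∀ i, x i < r - 1) →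
          ∀ (h1 : ∀ i, a i + x i < n) (h2 : ∀ i, a' i + x i < n),
            σ (fun i => ⟨a i + x i, h1 i⟩) = σ (fun i => ⟨a' i + x i, h2 i⟩)) ∧
        (∀ x : Fin d → ℕ, (∀ i, x i < r - 1) →
          ∀ (h1 : ∀ i, b i + x i < n) (h2 : ∀ i, b' i + x i < n),
            σ (fun i => ⟨b i + x i, h1 i⟩) = σ (fun i => ⟨b' i + x i, h2 i⟩))}
      = q ^ (n ^ d - 2 * (r - 1) ^ d) := by
  set D : Finset (Fin d → Fin n) := boxF d r n a' ∪ boxF d r n b with hD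
  set pred := predFun d r n a a' b b' haΛ hb'Λ with hpred
  set ψ := psiFun d r n a a' b b' i0 with hψdef
  -- membership exclusions
  have hBnotA' : ∀ u : Fin d → Fin n, u ∈ boxF d r n b → u ∉ boxF d r n a' := by
    intro u hu hc
    exact hdisj _ (Or.inr (inBox_of_mem hu)) (Or.inl (inBox_of_mem hc))
  -- pred on the two branches
  have hpredA' : ∀ u (h : u ∈ boxF d r n a'),
      pred u = fun i => (⟨(u i : ℕ) - a' i + a i,
        by have := mem_boxF.mp h i; have := haΛ i; omega⟩ : Fin n) := by
    intro u h
    rw [hpred, predFun, dif_pos h]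
  have hpredB : ∀ u (h : u ∈ boxF d r n b),
      pred u = fun i => (⟨(u i : ℕ) - b i + b' i,
        by have := mem_boxF.mp h i; have := hb'Λ i; omega⟩ : Fin n) := by
    intro u h
    rw [hpred, predFun, dif_neg (hBnotA' u h), dif_pos h]
  -- ψ decreases along pred on D
  have hψ : ∀ u ∈ D, ψ (pred u) < ψ u := by
    intro u hu
    rcases Finset.mem_union.mp hu with h | h
    · have hm := mem_boxF.mp h
      rw [hpredA' u h]
      have hpmem : inBox d r a (fun i => (((fun i => (⟨(u i : ℕ) - a' i + a i,
          by have := mem_boxF.mp h i; have := haΛ i; omega⟩ : Fin n)) : Fin d → Fin n) i : ℕ)) := by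
        intro i
        have := hm i
        show a i ≤ (u i : ℕ) - a' i + a i ∧ (u i : ℕ) - a' i + a i < a i + (r - 1)
        omega
      have hnot : (fun i => (⟨(u i : ℕ) - a' i + a i,
          by have := mem_boxF.mp h i; have := haΛ i; omega⟩ : Fin n)) ∉
          boxF d r n a' ∪ boxF d r n b' := by
        intro hc
        rcases Finset.mem_union.mp hc with hc | hc
        · exact hdisj _ (Or.inl hpmem) (Or.inl (inBox_of_mem hc))
        · exact hdisj _ (Or.inl hpmem) (Or.inr (inBox_of_mem hc))
      have hin : u ∈ boxF d r n a' ∪ boxF d r n b' := Finset.mem_union_left _ h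
      rw [hψdef]
      simp only [psiFun, if_neg hnot, if_pos hin]
      have h0 := hm i0
      have h1 := ha'Λ i0
      have h2 := hb'Λ i0
      have h3 := (u i0).isLt
      omega
    · have hm := mem_boxF.mp h
      rw [hpredB u h]
      have hpmem : inBox d r b' (fun i => (((fun i => (⟨(u i : ℕ) - b i + b' i,
          by have := mem_boxF.mp h i; have := hb'Λ i; omega⟩ : Fin n)) : Fin d → Fin n) i : ℕ)) := by
        intro i
        have := hm i
        show b' i ≤ (u i : ℕ) - b i + b' i ∧ (u i : ℕ) - b i + b' i < b' i + (r - 1)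
        omega
      have hin : (fun i => (⟨(u i : ℕ) - b i + b' i,
          by have := mem_boxF.mp h i; have := hb'Λ i; omega⟩ : Fin n)) ∈
          boxF d r n a' ∪ boxF d r n b' :=
        Finset.mem_union_right _ (mem_boxF.mpr hpmem)
      have hnot : u ∉ boxF d r n a' ∪ boxF d r n b' := by
        intro hc
        rcases Finset.mem_union.mp hc with hc | hc
        · exact hdisj _ (Or.inr (inBox_of_mem h)) (Or.inl (inBox_of_mem hc))
        · exact hdisj _ (Or.inr (inBox_of_mem h)) (Or.inr (inBox_of_mem hc))
      rw [hψdef]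
      simp only [psiFun, if_pos hin, if_neg hnot]
      have h0 := hm i0
      have h1 := ha'Λ i0
      have h2 := hb'Λ i0
      have h3 := (u i0).isLt
      omega
  -- the constraint system is equivalent to the triangular system
  have hiff : ∀ σ : (Fin d → Fin n) → Fin q,
      ((∀ x : Fin d → ℕ, (∀ i, x i < r - 1) →
          ∀ (h1 : ∀ i, a i + x i < n) (h2 : ∀ i, a' i + x i < n),
            σ (fun i => ⟨a i + x i, h1 i⟩) = σ (fun i => ⟨a' i + x i, h2 i⟩)) ∧
        (∀ x : Fin d → ℕ, (∀ i, x i < r - 1) →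
          ∀ (h1 : ∀ i, b i + x i < n) (h2 : ∀ i, b' i + x i < n),
            σ (fun i => ⟨b i + x i, h1 i⟩) = σ (fun i => ⟨b' i + x i, h2 i⟩)))
      ↔ (∀ u ∈ D, σ u = σ (pred u)) := by
    intro σ
    constructor
    · rintro ⟨hA, hB⟩ u hu
      rcases Finset.mem_union.mp hu with h | h
      · have hm := mem_boxF.mp h
        have hx : ∀ i, (u i : ℕ) - a' i < r - 1 := fun i => by have := hm i; omega
        have h1' : ∀ i, a i + ((u i : ℕ) - a' i) < n := fun i => by
          have := hm i; have := haΛ i; omega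
        have h2' : ∀ i, a' i + ((u i : ℕ) - a' i) < n := fun i => by
          have := hm i; have := (u i).isLt; omega
        have e1 : (fun i => (⟨a' i + ((u i : ℕ) - a' i), h2' i⟩ : Fin n)) = u := by
          funext i
          exact Fin.ext (by simp; have := hm i; omega)
        have e2 : (fun i => (⟨a i + ((u i : ℕ) - a' i), h1' i⟩ : Fin n)) = pred u := by
          rw [hpredA' u h]
          funext i
          exact Fin.ext (by simp; omega)
        calc σ u = σ (fun i => ⟨a' i + ((u i : ℕ) - a' i), h2' i⟩) := by rw [e1]
          _ = σ (fun i => ⟨a i + ((u i : ℕ) - a' i), h1' i⟩) :=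
              (hA (fun i => (u i : ℕ) - a' i) hx h1' h2').symm
          _ = σ (pred u) := by rw [e2]
      · have hm := mem_boxF.mp h
        have hx : ∀ i, (u i : ℕ) - b i < r - 1 := fun i => by have := hm i; omega
        have h1' : ∀ i, b i + ((u i : ℕ) - b i) < n := fun i => by
          have := hm i; have := (u i).isLt; omega
        have h2' : ∀ i, b' i + ((u i : ℕ) - b i) < n := fun i => by
          have := hm i; have := hb'Λ i; omega
        have e1 : (fun i => (⟨b i + ((u i : ℕ) - b i), h1' i⟩ : Fin n)) = u := by
          funext i
          exact Fin.ext (by simp; have := hm i; omega)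
        have e2 : (fun i => (⟨b' i + ((u i : ℕ) - b i), h2' i⟩ : Fin n)) = pred u := by
          rw [hpredB u h]
          funext i
          exact Fin.ext (by simp; omega)
        calc σ u = σ (fun i => ⟨b i + ((u i : ℕ) - b i), h1' i⟩) := by rw [e1]
          _ = σ (fun i => ⟨b' i + ((u i : ℕ) - b i), h2' i⟩) :=
              hB (fun i => (u i : ℕ) - b i) hx h1' h2'
          _ = σ (pred u) := by rw [e2]
    · intro h
      constructor
      · intro x hx h1 h2
        have hu : (fun i => (⟨a' i + x i, h2 i⟩ : Fin n)) ∈ boxF d r n a' :=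
          mem_boxF.mpr (fun i => ⟨by simp, by simp; have := hx i; omega⟩)
        have hh := h _ (Finset.mem_union_left _ hu)
        have e2 : pred (fun i => (⟨a' i + x i, h2 i⟩ : Fin n)) =
            fun i => (⟨a i + x i, h1 i⟩ : Fin n) := by
          rw [hpredA' _ hu]
          funext i
          exact Fin.ext (by simp; omega)
        rw [e2] at hh
        exact hh.symm
      · intro x hx h1 h2
        have hu : (fun i => (⟨b i + x i, h1 i⟩ : Fin n)) ∈ boxF d r n b :=
          mem_boxF.mpr (fun i => ⟨by simp, by simp; have := hx i; omega⟩)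
        have hh := h _ (Finset.mem_union_right _ hu)
        have e2 : pred (fun i => (⟨b i + x i, h1 i⟩ : Fin n)) =
            fun i => (⟨b' i + x i, h2 i⟩ : Fin n) := by
          rw [hpredB _ hu]
          funext i
          exact Fin.ext (by simp; omega)
        rw [e2] at hh
        exact hh
  rw [Nat.card_congr (Equiv.subtypeEquivRight hiff), count_triangular q D pred ψ hψ]
  have hcΩ : Fintype.card (Fin d → Fin n) = n ^ d := by simp [Fintype.card_fun]
  have hcD : D.card = 2 * (r - 1) ^ d := by
    rw [hD, Finset.card_union_of_disjoint (Finset.disjoint_right.mpr hBnotA'),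
      card_boxF r n hr a' ha'Λ, card_boxF r n hr b hbΛ]
    ring
  rw [hcΩ, hcD]

/-- For fixed `(r-1)`-boxes `A, A', B, B' ⊆ Λ_n` with `A ∩ B ≠ ∅`,
`A' ∩ B' ≠ ∅`, `dist_∞(A, A') > 4r` and translation vectors `v_{A,A'} ≠ v_{B,B'}`,
the probability that `σ|_A = σ|_{A'}` and `σ|_B = σ|_{B'}` is exactly `q^{-2(r-1)^d}`. -/
theorem stmt14 (q d r n : ℕ) (hq : 2 ≤ q) (hd : 2 ≤ d) (hr : 2 ≤ r) (hrn : r ≤ n)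
    (a a' b b' : Fin d → ℕ)
    (haΛ : ∀ i, a i + (r - 1) ≤ n) (ha'Λ : ∀ i, a' i + (r - 1) ≤ n)
    (hbΛ : ∀ i, b i + (r - 1) ≤ n) (hb'Λ : ∀ i, b' i + (r - 1) ≤ n)
    (hABmeet : ∃ x, inBox d r a x ∧ inBox d r b x)
    (hA'B'meet : ∃ x, inBox d r a' x ∧ inBox d r b' x)
    (hfar : ∀ x y, inBox d r a x → inBox d r a' y → ∃ i, (4 * r : ℤ) < |(x i : ℤ) - y i|)
    (hv : (fun i => (a' i : ℤ) - a i) ≠ (fun i => (b' i : ℤ) - b i)) :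
    (Nat.card {σ : (Fin d → Fin n) → Fin q //
        (∀ x : Fin d → ℕ, (∀ i, x i < r - 1) →
          ∀ (h1 : ∀ i, a i + x i < n) (h2 : ∀ i, a' i + x i < n),
            σ (fun i => ⟨a i + x i, h1 i⟩) = σ (fun i => ⟨a' i + x i, h2 i⟩)) ∧
        (∀ x : Fin d → ℕ, (∀ i, x i < r - 1) →
          ∀ (h1 : ∀ i, b i + x i < n) (h2 : ∀ i, b' i + x i < n),
            σ (fun i => ⟨b i + x i, h1 i⟩) = σ (fun i => ⟨b' i + x i, h2 i⟩))} : ℝ)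
      / (q : ℝ) ^ (n ^ d) = (q : ℝ) ^ (-(2 * (r - 1 : ℕ) ^ d : ℤ)) := by
  obtain ⟨xab, hxa, hxb⟩ := hABmeet
  obtain ⟨xab', hxa', hxb'⟩ := hA'B'meet
  -- separation of the two clusters
  have key : ∀ y z : Fin d → ℕ, inBox d r a y → inBox d r a' z →
      ∀ x : Fin d → ℕ, (∀ i, (y i : ℤ) - x i ≤ r ∧ (x i : ℤ) - y i ≤ r) →
      (∀ i, (z i : ℤ) - x i ≤ r ∧ (x i : ℤ) - z i ≤ r) → False := by
    intro y z hy hz x hyx hzx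
    obtain ⟨i, hi⟩ := hfar y z hy hz
    rcases lt_abs.mp hi with h4 | h4 <;>
      · have hy1 := hyx i
        have hz1 := hzx i
        omega
  have hdisj : ∀ x : Fin d → ℕ, (inBox d r a x ∨ inBox d r b x) →
      (inBox d r a' x ∨ inBox d r b' x) → False := by
    intro x hL hR
    have hsmall : ∀ (c : Fin d → ℕ) (p p' : Fin d → ℕ), inBox d r c p → inBox d r c p' →
        ∀ i, (p i : ℤ) - p' i ≤ r ∧ (p' i : ℤ) - p i ≤ r := by
      intro c p p' hp hp' i
      have h1 := hp i
      have h2 := hp' i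
      omega
    have htriv : ∀ p : Fin d → ℕ, ∀ i, (p i : ℤ) - p i ≤ r ∧ (p i : ℤ) - p i ≤ r := by
      intro p i
      have : (0:ℤ) ≤ r := by positivity
      omega
    rcases hL with h | h <;> rcases hR with h' | h'
    · exact key x x h h' x (htriv x) (htriv x)
    · exact key x xab' h hxa' x (htriv x) (hsmall b' xab' x hxb' h')
    · exact key xab x hxa h' x (hsmall b xab x hxb h) (htriv x)
    · exact key xab xab' hxa hxa' x (hsmall b xab x hxb h) (hsmall b' xab' x hxb' h')
  -- n is large
  have hn4 : 4 * r < n := by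
    obtain ⟨i, hi⟩ := hfar xab xab' hxa hxa'
    have h1 := hxa i
    have h2 := hxa' i
    have h3 := haΛ i
    have h4 := ha'Λ i
    rcases lt_abs.mp hi with h5 | h5 <;> omega
  have hle : 2 * (r - 1) ^ d ≤ n ^ d := by
    calc 2 * (r - 1) ^ d ≤ 2 * r ^ d := by
          exact Nat.mul_le_mul_left _ (Nat.pow_le_pow_left (by omega) _)
      _ ≤ 2 ^ d * r ^ d := Nat.mul_le_mul_right _
          (by calc 2 = 2 ^ 1 := by norm_num
                _ ≤ 2 ^ d := Nat.pow_le_pow_right (by norm_num) (by omega))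
      _ = (2 * r) ^ d := (mul_pow 2 r d).symm
      _ ≤ n ^ d := Nat.pow_le_pow_left (by omega) _
  -- choose a separating coordinate
  have hex : ∃ i, (a' i : ℤ) - a i ≠ (b' i : ℤ) - b i := by
    by_contra h'
    push_neg at h'
    exact hv (funext h')
  obtain ⟨i0, hi0⟩ := hex
  have hcard : Nat.card {σ : (Fin d → Fin n) → Fin q //
      (∀ x : Fin d → ℕ, (∀ i, x i < r - 1) →
        ∀ (h1 : ∀ i, a i + x i < n) (h2 : ∀ i, a' i + x i < n),
          σ (fun i => ⟨a i + x i, h1 i⟩) = σ (fun i => ⟨a' i + x i, h2 i⟩)) ∧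
      (∀ x : Fin d → ℕ, (∀ i, x i < r - 1) →
        ∀ (h1 : ∀ i, b i + x i < n) (h2 : ∀ i, b' i + x i < n),
          σ (fun i => ⟨b i + x i, h1 i⟩) = σ (fun i => ⟨b' i + x i, h2 i⟩))}
      = q ^ (n ^ d - 2 * (r - 1) ^ d) := by
    rcases lt_or_gt_of_ne hi0 with hc | hc
    · rw [Nat.card_congr (Equiv.subtypeEquivRight (fun σ => and_comm))]
      exact main_count q d r n hr b b' a a' hbΛ hb'Λ haΛ ha'Λ
        (fun x hL hR => hdisj x hL.symm hR.symm) i0 hc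
    · exact main_count q d r n hr a a' b b' haΛ ha'Λ hbΛ hb'Λ hdisj i0 hc
  rw [hcard]
  have hq0 : (q : ℝ) ≠ 0 := by positivity
  push_cast
  rw [div_eq_iff (by positivity), ← zpow_natCast (q : ℝ) (n ^ d - 2 * (r - 1) ^ d),
    ← zpow_natCast (q : ℝ) (n ^ d), ← zpow_add₀ hq0]
  congr 1
  push_cast [Nat.cast_sub hle]
  ring
end

section
/- Let d ≥ 1, q ≥ 2, and let B, B' be two distinct boxes of side length s in Λ_n = {0,...,n-1}^d (possibly overlapping), with B' = B + w for some w ≠ 0. If σ : Λ_n → Fin q is i.i.d. uniform, then P(σ(u + w) = σ(u) for all u ∈ B) = q^{-s^d}. -/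
section aux

variable {Λ : Type*} [DecidableEq Λ]

/-- Follow `f` starting at `u` until we leave `S`. -/
def resolveAux (S : Finset Λ) (f : Λ → Λ) (m : Λ → ℕ)
    (h : ∀ u ∈ S, m (f u) < m u) (u : Λ) : Λ :=
  if hu : u ∈ S then resolveAux S f m h (f u) else u
termination_by m u
decreasing_by exact h u hu

lemma resolveAux_of_mem (S : Finset Λ) (f : Λ → Λ) (m : Λ → ℕ)
    (h : ∀ u ∈ S, m (f u) < m u) {u : Λ} (hu : u ∈ S) :
    resolveAux S f m h u = resolveAux S f m h (f u) := by
  rw [resolveAux]; simp [hu]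

lemma resolveAux_of_not_mem (S : Finset Λ) (f : Λ → Λ) (m : Λ → ℕ)
    (h : ∀ u ∈ S, m (f u) < m u) {u : Λ} (hu : u ∉ S) :
    resolveAux S f m h u = u := by
  rw [resolveAux]; simp [hu]

lemma resolveAux_not_mem (S : Finset Λ) (f : Λ → Λ) (m : Λ → ℕ)
    (h : ∀ u ∈ S, m (f u) < m u) (u : Λ) :
    resolveAux S f m h u ∉ S := by
  by_cases hu : u ∈ S
  · rw [resolveAux_of_mem S f m h hu]
    exact resolveAux_not_mem S f m h (f u)
  · rw [resolveAux_of_not_mem S f m h hu]; exact hu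
termination_by m u
decreasing_by exact h u hu

lemma resolveAux_spec {α : Type*} (S : Finset Λ) (f : Λ → Λ) (m : Λ → ℕ)
    (h : ∀ u ∈ S, m (f u) < m u) (σ : Λ → α)
    (hσ : ∀ u ∈ S, σ u = σ (f u)) (u : Λ) :
    σ (resolveAux S f m h u) = σ u := by
  by_cases hu : u ∈ S
  · rw [resolveAux_of_mem S f m h hu, resolveAux_spec S f m h σ hσ (f u)]
    exact (hσ u hu).symm
  · rw [resolveAux_of_not_mem S f m h hu]
termination_by m u
decreasing_by exact h u hu

lemma count_shift [Fintype Λ] (q : ℕ) (S : Finset Λ) (f : Λ → Λ) (m : Λ → ℕ)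
    (h : ∀ u ∈ S, m (f u) < m u) :
    Nat.card {σ : Λ → Fin q // ∀ u ∈ S, σ u = σ (f u)}
      = q ^ (Fintype.card Λ - S.card) := by
  classical
  have e : {σ : Λ → Fin q // ∀ u ∈ S, σ u = σ (f u)}
      ≃ ({u : Λ // u ∉ S} → Fin q) :=
    { toFun := fun σ u => σ.1 u.1
      invFun := fun τ =>
        ⟨fun u => τ ⟨resolveAux S f m h u, resolveAux_not_mem S f m h u⟩, by
          intro u hu
          exact congrArg τ (Subtype.ext (resolveAux_of_mem S f m h hu))⟩
      left_inv := by
        intro σ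
        apply Subtype.ext
        funext u
        exact resolveAux_spec S f m h σ.1 σ.2 u
      right_inv := by
        intro τ
        funext u
        exact congrArg τ (Subtype.ext (resolveAux_of_not_mem S f m h u.2)) }
  rw [Nat.card_congr e, Nat.card_eq_fintype_card, Fintype.card_fun,
    Fintype.card_fin, Fintype.card_subtype_compl, Fintype.card_coe]

end aux

/-- For two distinct (possibly overlapping) `s`-boxes `B, B' = B + w ⊆ Λ_n`
(given by corners `a ≠ a'`), the probability under i.i.d. uniform `σ` that
`σ(u + w) = σ(u)` for all `u ∈ B` is exactly `q^{-s^d}`. -/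
theorem stmt16 (q d s n : ℕ) (hq : 2 ≤ q) (hd : 1 ≤ d) (hs : 1 ≤ s) (hsn : s ≤ n)
    (a a' : Fin d → ℕ) (ha : ∀ i, a i + s ≤ n) (ha' : ∀ i, a' i + s ≤ n) (hne : a ≠ a') :
    (Nat.card {σ : (Fin d → Fin n) → Fin q //
        ∀ x : Fin d → ℕ, (∀ i, x i < s) →
          ∀ (h1 : ∀ i, a i + x i < n) (h2 : ∀ i, a' i + x i < n),
            σ (fun i => ⟨a i + x i, h1 i⟩) = σ (fun i => ⟨a' i + x i, h2 i⟩)} : ℝ)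
      / (q : ℝ) ^ (n ^ d) = (q : ℝ) ^ (-(s ^ d : ℤ)) := by
  classical
  have npos : 0 < n := lt_of_lt_of_le hs hsn
  obtain ⟨i0, hi0⟩ : ∃ i, a i ≠ a' i := Function.ne_iff.mp hne
  set S : Finset (Fin d → Fin n) :=
    Finset.univ.filter (fun u => ∀ i, a i ≤ (u i : ℕ) ∧ (u i : ℕ) < a i + s) with hS
  set f : (Fin d → Fin n) → (Fin d → Fin n) :=
    fun u i => ⟨((u i : ℕ) - a i + a' i) % n, Nat.mod_lt _ npos⟩ with hf
  set m : (Fin d → Fin n) → ℕ :=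
    fun u => if a i0 < a' i0 then n - (u i0 : ℕ) else (u i0 : ℕ) with hm
  have hmemS : ∀ u : Fin d → Fin n,
      u ∈ S ↔ ∀ i, a i ≤ (u i : ℕ) ∧ (u i : ℕ) < a i + s := by
    intro u; simp [hS]
  have hfval : ∀ u : Fin d → Fin n, ∀ i,
      ((u i : ℕ) : ℕ) < a i + s → ((f u i : ℕ)) = (u i : ℕ) - a i + a' i := by
    intro u i hui
    have hb : (u i : ℕ) - a i + a' i < n := by have := ha' i; omega
    simp [hf, Nat.mod_eq_of_lt hb]
  have hdec : ∀ u ∈ S, m (f u) < m u := by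
    intro u hu
    have h1 := (hmemS u).mp hu i0
    have hun : (u i0 : ℕ) < n := (u i0).2
    have hb : (u i0 : ℕ) - a i0 + a' i0 < n := by have := ha' i0; omega
    have hmod := Nat.mod_eq_of_lt hb
    simp only [hm, hf]
    split_ifs with hlt
    · omega
    · omega
  -- identify the constraint sets
  have hPiff : ∀ σ : (Fin d → Fin n) → Fin q,
      (∀ x : Fin d → ℕ, (∀ i, x i < s) →
          ∀ (h1 : ∀ i, a i + x i < n) (h2 : ∀ i, a' i + x i < n),
            σ (fun i => ⟨a i + x i, h1 i⟩) = σ (fun i => ⟨a' i + x i, h2 i⟩))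
        ↔ (∀ u ∈ S, σ u = σ (f u)) := by
    intro σ
    constructor
    · intro hP u hu
      have hub := (hmemS u).mp hu
      have hxlt : ∀ i, ((u i : ℕ) - a i) < s := fun i => by have := hub i; omega
      have h1 : ∀ i, a i + ((u i : ℕ) - a i) < n := fun i => by
        have := hub i; have := (u i).2; omega
      have h2 : ∀ i, a' i + ((u i : ℕ) - a i) < n := fun i => by
        have := hxlt i; have := ha' i; omega
      have := hP (fun i => (u i : ℕ) - a i) hxlt h1 h2
      have e1 : (fun i => (⟨a i + ((u i : ℕ) - a i), h1 i⟩ : Fin n)) = u := by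
        funext i; apply Fin.ext; simp; have := hub i; omega
      have e2 : (fun i => (⟨a' i + ((u i : ℕ) - a i), h2 i⟩ : Fin n)) = f u := by
        funext i; apply Fin.ext
        rw [hfval u i (hub i).2]
        simp; have := hub i; omega
      rw [e1, e2] at this; exact this
    · intro hP x hx h1 h2
      set u : Fin d → Fin n := fun i => ⟨a i + x i, h1 i⟩ with hu
      have huval : ∀ i, (u i : ℕ) = a i + x i := fun i => rfl
      have huS : u ∈ S := (hmemS u).mpr (fun i => by rw [huval i]; have := hx i; omega)
      have := hP u huS
      have e2 : f u = (fun i => (⟨a' i + x i, h2 i⟩ : Fin n)) := by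
        funext i; apply Fin.ext
        rw [hfval u i (by rw [huval i]; have := hx i; omega), huval i]
        simp; omega
      rw [e2] at this; exact this
  have hcardΛ : Fintype.card (Fin d → Fin n) = n ^ d := by simp
  have hcardS : S.card = s ^ d := by
    set g : (Fin d → Fin s) → (Fin d → Fin n) :=
      fun x => (fun i => ⟨a i + (x i : ℕ), by have := ha i; have := (x i).2; omega⟩) with hg
    have hginj : Function.Injective g := by
      intro x y hxy
      funext i
      apply Fin.ext
      have := congrArg (fun z : Fin d → Fin n => (z i : ℕ)) hxy
      simpa [hg] using this
    have himg : S = Finset.image g Finset.univ := by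
      ext u
      rw [hmemS]
      simp only [Finset.mem_image, Finset.mem_univ, true_and]
      constructor
      · intro hub
        refine ⟨fun i => ⟨(u i : ℕ) - a i, by have := hub i; omega⟩, ?_⟩
        funext i; apply Fin.ext; simp [hg]; have := hub i; omega
      · rintro ⟨x, rfl⟩ i
        simp [hg]
    rw [himg, Finset.card_image_of_injective _ hginj, Finset.card_univ]
    simp
  have hcount := count_shift q S f m hdec
  rw [hcardΛ, hcardS] at hcount
  have hNe : Nat.card {σ : (Fin d → Fin n) → Fin q //
        ∀ x : Fin d → ℕ, (∀ i, x i < s) →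
          ∀ (h1 : ∀ i, a i + x i < n) (h2 : ∀ i, a' i + x i < n),
            σ (fun i => ⟨a i + x i, h1 i⟩) = σ (fun i => ⟨a' i + x i, h2 i⟩)}
      = q ^ (n ^ d - s ^ d) := by
    rw [Nat.card_congr (Equiv.subtypeEquivRight hPiff), hcount]
  have hq0 : (q : ℝ) ≠ 0 := by positivity
  have hle : s ^ d ≤ n ^ d := Nat.pow_le_pow_left hsn d
  rw [hNe, Nat.cast_pow,
    show (-(s ^ d : ℤ)) = ((n ^ d - s ^ d : ℕ) : ℤ) - ((n ^ d : ℕ) : ℤ) by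
      rw [Nat.cast_sub hle]; push_cast; ring,
    zpow_sub₀ hq0, zpow_natCast, zpow_natCast]
end

section
/- Let q ≥ 2, d ≥ 2, r ≥ 2 and suppose q^{(r-1)^d} ≥ n^{d(1+ε/2)} for some ε ∈ (0,1). Let σ : Λ_n → Fin q be i.i.d. uniform. For fixed v and a fixed partition of {0,...,r-1} into ℓ intervals I_1,...,I_ℓ, and fixed pairwise-disjoint translated copies B'_{I_1},...,B'_{I_ℓ} of the rectangles B_{I_j}(v) = ⋃_{s∈I_j} B_s(v) (each disjoint from all B_{I_j}(v)), where B_s(v) = (v_1+1, v_2-s, v_3, ..., v_d) + [0,r-2]×[0,r-1]^{d-1}, we have P(σ|_{B_{I_j}(v)} = σ|_{B'_{I_j}} for all 1 ≤ j ≤ ℓ) ≤ q^{-(r-1)^d(1+ℓ)}. -/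
open Finset

/-- Membership in the rectangle with smallest corner `c`, of side length `r-1` in coordinate
`0`, side length `len1` in coordinate `1`, and side length `r` in all other coordinates. -/
def inRect (d r : ℕ) (c : Fin (d + 2) → ℕ) (len1 : ℕ) (x : Fin (d + 2) → ℕ) : Prop :=
  (c 0 ≤ x 0 ∧ x 0 < c 0 + (r - 1)) ∧ (c 1 ≤ x 1 ∧ x 1 < c 1 + len1) ∧
    ∀ i, i ≠ 0 → i ≠ 1 → c i ≤ x i ∧ x i < c i + r

lemma fin2_zero_ne_one (d : ℕ) : (0 : Fin (d + 2)) ≠ 1 := by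
  simp [Fin.ext_iff]

/-- The set of offsets inside a rectangle of dimensions `(r-1, L, r, …, r)`. -/
def shapeSet (d r L : ℕ) : Finset (Fin (d + 2) → ℕ) :=
  Fintype.piFinset fun i => Finset.range (if i = 0 then r - 1 else if i = 1 then L else r)

lemma mem_shapeSet {d r L : ℕ} {x : Fin (d + 2) → ℕ} :
    x ∈ shapeSet d r L ↔ x 0 < r - 1 ∧ x 1 < L ∧ ∀ i, i ≠ 0 → i ≠ 1 → x i < r := by
  simp only [shapeSet, Fintype.mem_piFinset, Finset.mem_range]
  constructor
  · intro h
    refine ⟨by simpa using h 0, ?_, fun i h0 h1 => ?_⟩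
    · have := h 1
      rwa [if_neg (fin2_zero_ne_one d).symm, if_pos rfl] at this
    · have := h i
      rwa [if_neg h0, if_neg h1] at this
  · rintro ⟨h0, h1, h⟩ i
    by_cases hi0 : i = 0
    · subst hi0; simpa using h0
    by_cases hi1 : i = 1
    · subst hi1; rwa [if_neg (fin2_zero_ne_one d).symm, if_pos rfl]
    · rw [if_neg hi0, if_neg hi1]; exact h i hi0 hi1

lemma card_shapeSet (d r L : ℕ) : (shapeSet d r L).card = (r - 1) * (L * r ^ d) := by
  rw [shapeSet, Fintype.card_piFinset]
  simp only [Finset.card_range]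
  rw [Fin.prod_univ_succ, Fin.prod_univ_succ]
  have hss : ∀ i : Fin d, (i.succ.succ : Fin (d + 2)) ≠ 1 := by
    intro i h
    rw [← Fin.succ_zero_eq_one] at h
    exact Fin.succ_ne_zero i (Fin.succ_injective _ h)
  simp [Fin.succ_zero_eq_one, (fin2_zero_ne_one d).symm, Fin.succ_ne_zero, hss]

lemma rect_of_shape {d r L : ℕ} (a : Fin (d + 2) → ℕ) {x : Fin (d + 2) → ℕ}
    (hx : x ∈ shapeSet d r L) : inRect d r a L fun i => a i + x i := by
  rw [mem_shapeSet] at hx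
  refine ⟨⟨Nat.le_add_right _ _, ?_⟩, ⟨Nat.le_add_right _ _, ?_⟩,
    fun i h0 h1 => ⟨Nat.le_add_right _ _, ?_⟩⟩
  · show a 0 + x 0 < a 0 + (r - 1); omega
  · show a 1 + x 1 < a 1 + L; omega
  · show a i + x i < a i + r; have := hx.2.2 i h0 h1; omega

/-- The point `a + x`, clipped into `Λ_n` via `% n`. -/
def clipPt (d n : ℕ) (hn : 0 < n) (a x : Fin (d + 2) → ℕ) : Fin (d + 2) → Fin n :=
  fun i => ⟨(a i + x i) % n, Nat.mod_lt _ hn⟩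

/-- Central estimate in the proof of Proposition 3.5. In dimension `d + 2 ≥ 2`,
with `q^{(r-1)^{d+2}} ≥ n^{(d+2)(1+ε/2)}`, fix `v` and a partition of `{0,…,r-1}` into `ℓ`
consecutive intervals `I_j = [e j, e (j+1))` (`e 0 = 0`, `e ℓ = r`, `e` increasing). The
rectangle `B_{I_j}(v) = ⋃_{s ∈ I_j} B_s(v)` has corner `c j = (v₀+1, v₁-(e (j+1)-1), v₂, …)`
and second side `r - 1 + (e (j+1) - e j)`. For fixed translated copies `B'_{I_j}` with corners
`b j` (same shape), lying in `Λ_n`, pairwise disjoint and each disjoint from every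
`B_{I_{j'}}(v)`, we have `P(σ|_{B_{I_j}(v)} = σ|_{B'_{I_j}} ∀j) ≤ q^{-(r-1)^{d+2}(1+ℓ)}`. -/
theorem stmt19 (q d r n ℓ : ℕ) (hq : 2 ≤ q) (hr : 2 ≤ r) (hrn : r < n) (hℓ : 1 ≤ ℓ)
    (ε : ℝ) (hε0 : 0 < ε) (hε1 : ε < 1)
    (hthresh : (n : ℝ) ^ ((d + 2 : ℝ) * (1 + ε / 2)) ≤ (q : ℝ) ^ ((r - 1) ^ (d + 2) : ℕ))
    (v : Fin (d + 2) → ℕ) (hv : ∀ i, v i + r ≤ n) (hv1 : r ≤ v 1)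
    (e : ℕ → ℕ) (he0 : e 0 = 0) (heℓ : e ℓ = r) (hemono : ∀ j < ℓ, e j < e (j + 1))
    -- corners and second side lengths of the rectangles `B_{I_j}(v)`
    (c : ℕ → Fin (d + 2) → ℕ)
    (hc : ∀ j, c j = fun i => if i = 0 then v 0 + 1 else
        if i = 1 then v 1 - (e (j + 1) - 1) else v i)
    (len1 : ℕ → ℕ) (hlen1 : ∀ j, len1 j = r - 1 + (e (j + 1) - e j))
    -- corners of the translated copies `B'_{I_j}`, lying inside `Λ_n`
    (b : ℕ → Fin (d + 2) → ℕ)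
    (hbΛ : ∀ j < ℓ, b j 0 + (r - 1) ≤ n ∧ b j 1 + len1 j ≤ n ∧
        ∀ i, i ≠ 0 → i ≠ 1 → b j i + r ≤ n)
    -- each `B'_{I_j}` is disjoint from every `B_{I_{j'}}(v)`
    (hdisj1 : ∀ j < ℓ, ∀ j' < ℓ, ∀ x,
        ¬(inRect d r (c j') (len1 j') x ∧ inRect d r (b j) (len1 j) x))
    -- the `B'_{I_j}` are pairwise disjoint
    (hdisj2 : ∀ j < ℓ, ∀ j' < ℓ, j ≠ j' → ∀ x,
        ¬(inRect d r (b j) (len1 j) x ∧ inRect d r (b j') (len1 j') x)) :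
    (Nat.card {σ : (Fin (d + 2) → Fin n) → Fin q //
        ∀ j < ℓ, ∀ x : Fin (d + 2) → ℕ,
          (x 0 < r - 1 ∧ x 1 < len1 j ∧ ∀ i, i ≠ 0 → i ≠ 1 → x i < r) →
          ∀ (h1 : ∀ i, c j i + x i < n) (h2 : ∀ i, b j i + x i < n),
            σ (fun i => ⟨c j i + x i, h1 i⟩) = σ (fun i => ⟨b j i + x i, h2 i⟩)} : ℝ)
      / (q : ℝ) ^ (n ^ (d + 2))
      ≤ (q : ℝ) ^ (-(((r - 1) ^ (d + 2) * (1 + ℓ) : ℕ) : ℤ)) := by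
  classical
  have hn : 0 < n := by omega
  have hq0 : 0 < q := by omega
  -- monotonicity facts about `e`
  have hemonole : ∀ j k, j ≤ k → k ≤ ℓ → e j ≤ e k := by
    intro j k hjk hk
    induction k with
    | zero => have : j = 0 := by omega
              subst this; exact le_rfl
    | succ m ih =>
      rcases Nat.lt_or_ge j (m + 1) with h | h
      · have h1 := hemono m (by omega)
        have h2 := ih (by omega) (by omega)
        omega
      · have : j = m + 1 := by omega
        subst this; exact le_rfl
  have heub : ∀ j < ℓ, e (j + 1) ≤ r := by
    intro j hj
    have := hemonole (j + 1) ℓ (by omega) le_rfl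
    omega
  -- point bounds
  have hblt : ∀ j, j < ℓ → ∀ x ∈ shapeSet d r (len1 j), ∀ i, b j i + x i < n := by
    intro j hj x hx i
    rw [mem_shapeSet] at hx
    obtain ⟨hb0, hb1, hbo⟩ := hbΛ j hj
    by_cases hi0 : i = 0
    · subst hi0; omega
    by_cases hi1 : i = 1
    · subst hi1; omega
    · have := hbo i hi0 hi1
      have := hx.2.2 i hi0 hi1
      omega
  have hclt : ∀ j, j < ℓ → ∀ x ∈ shapeSet d r (len1 j), ∀ i, c j i + x i < n := by
    intro j hj x hx i
    rw [mem_shapeSet] at hx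
    rw [hc]
    simp only
    have hub := heub j hj
    have hmn := hemono j hj
    have hl := hlen1 j
    by_cases hi0 : i = 0
    · subst hi0
      rw [if_pos rfl]
      have := hv 0
      omega
    by_cases hi1 : i = 1
    · subst hi1
      rw [if_neg (fin2_zero_ne_one d).symm, if_pos rfl]
      have := hv 1
      omega
    · rw [if_neg hi0, if_neg hi1]
      have := hv i
      have := hx.2.2 i hi0 hi1
      omega
  -- the union of the target rectangles, as a finset of `Λ_n`
  set T : Finset (Fin (d + 2) → Fin n) :=
    (Finset.range ℓ).biUnion
      (fun j => (shapeSet d r (len1 j)).image (clipPt d n hn (b j))) with hT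
  have himg : ∀ j, j < ℓ → ∀ y ∈ (shapeSet d r (len1 j)).image (clipPt d n hn (b j)),
      inRect d r (b j) (len1 j) (fun i => (y i : ℕ)) := by
    intro j hj y hy
    obtain ⟨x, hx, rfl⟩ := Finset.mem_image.mp hy
    have hvals : (fun i => ((clipPt d n hn (b j) x) i : ℕ)) = fun i => b j i + x i := by
      funext i
      exact Nat.mod_eq_of_lt (hblt j hj x hx i)
    rw [hvals]
    exact rect_of_shape (b j) hx
  have hTdisj : ∀ j1 ∈ Finset.range ℓ, ∀ j2 ∈ Finset.range ℓ, j1 ≠ j2 →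
      Disjoint ((shapeSet d r (len1 j1)).image (clipPt d n hn (b j1)))
        ((shapeSet d r (len1 j2)).image (clipPt d n hn (b j2))) := by
    intro j1 hj1 j2 hj2 hne
    rw [Finset.disjoint_left]
    intro y hy1 hy2
    exact hdisj2 j1 (Finset.mem_range.mp hj1) j2 (Finset.mem_range.mp hj2) hne _
      ⟨himg j1 (Finset.mem_range.mp hj1) y hy1, himg j2 (Finset.mem_range.mp hj2) y hy2⟩
  have hTcard : T.card = ∑ j ∈ Finset.range ℓ, (r - 1) * (len1 j * r ^ d) := by
    rw [hT, Finset.card_biUnion hTdisj]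
    refine Finset.sum_congr rfl fun j hj => ?_
    have hjℓ := Finset.mem_range.mp hj
    rw [Finset.card_image_of_injOn, card_shapeSet]
    intro x hx x' hx' hxx
    funext i
    have h1 := hblt j hjℓ x hx i
    have h2 := hblt j hjℓ x' hx' i
    have := congrArg Fin.val (congrFun hxx i)
    simp only [clipPt] at this
    rw [Nat.mod_eq_of_lt h1, Nat.mod_eq_of_lt h2] at this
    omega
  -- the restriction map is injective
  set P : ((Fin (d + 2) → Fin n) → Fin q) → Prop := fun σ =>
    ∀ j < ℓ, ∀ x : Fin (d + 2) → ℕ,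
      (x 0 < r - 1 ∧ x 1 < len1 j ∧ ∀ i, i ≠ 0 → i ≠ 1 → x i < r) →
      ∀ (h1 : ∀ i, c j i + x i < n) (h2 : ∀ i, b j i + x i < n),
        σ (fun i => ⟨c j i + x i, h1 i⟩) = σ (fun i => ⟨b j i + x i, h2 i⟩) with hP
  have hFinj : Function.Injective
      (fun (σ : {σ // P σ}) (y : {y : Fin (d + 2) → Fin n // y ∉ T}) => σ.1 y.1) := by
    intro σ σ' h
    apply Subtype.ext
    funext y
    by_cases hy : y ∈ T
    · rw [hT, Finset.mem_biUnion] at hy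
      obtain ⟨j, hjr, hyimg⟩ := hy
      have hj := Finset.mem_range.mp hjr
      obtain ⟨x, hx, hyx⟩ := Finset.mem_image.mp hyimg
      have h2 : ∀ i, b j i + x i < n := hblt j hj x hx
      have h1 : ∀ i, c j i + x i < n := hclt j hj x hx
      have hxb := mem_shapeSet.mp hx
      have key := σ.2 j hj x ⟨hxb.1, hxb.2.1, hxb.2.2⟩ h1 h2
      have key' := σ'.2 j hj x ⟨hxb.1, hxb.2.1, hxb.2.2⟩ h1 h2
      have hy_eq : y = fun i => (⟨b j i + x i, h2 i⟩ : Fin n) := by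
        rw [← hyx]
        funext i
        exact Fin.ext (Nat.mod_eq_of_lt (h2 i))
      have hcnot : (fun i => (⟨c j i + x i, h1 i⟩ : Fin n)) ∉ T := by
        intro hmem
        rw [hT, Finset.mem_biUnion] at hmem
        obtain ⟨j', hj'r, hmem'⟩ := hmem
        have hj' := Finset.mem_range.mp hj'r
        have hb' := himg j' hj' _ hmem'
        have hcr : inRect d r (c j) (len1 j) (fun i => c j i + x i) :=
          rect_of_shape (c j) hx
        exact hdisj1 j' hj' j hj (fun i => c j i + x i) ⟨hcr, hb'⟩
      calc σ.1 y = σ.1 (fun i => ⟨b j i + x i, h2 i⟩) := by rw [← hy_eq]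
        _ = σ.1 (fun i => ⟨c j i + x i, h1 i⟩) := key.symm
        _ = σ'.1 (fun i => ⟨c j i + x i, h1 i⟩) := congrFun h ⟨_, hcnot⟩
        _ = σ'.1 (fun i => ⟨b j i + x i, h2 i⟩) := key'
        _ = σ'.1 y := by rw [← hy_eq]
    · exact congrFun h ⟨y, hy⟩
  have hΛcard : Fintype.card (Fin (d + 2) → Fin n) = n ^ (d + 2) := by
    simp
  have hcard1 : Nat.card {σ // P σ} ≤ q ^ (n ^ (d + 2) - T.card) := by
    have hle := Nat.card_le_card_of_injective _ hFinj
    have : Nat.card ({y : Fin (d + 2) → Fin n // y ∉ T} → Fin q)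
        = q ^ (n ^ (d + 2) - T.card) := by
      rw [Nat.card_eq_fintype_card, Fintype.card_fun, Fintype.card_fin]
      congr 1
      rw [Fintype.card_subtype_compl, hΛcard]
      congr 1
      simp [Fintype.card_subtype]
    omega
  -- numerics
  have hsumlen : ∑ j ∈ Finset.range ℓ, len1 j = ℓ * (r - 1) + r := by
    have htel : ∀ m, m ≤ ℓ → ∑ j ∈ Finset.range m, (e (j + 1) - e j) = e m := by
      intro m hm
      induction m with
      | zero => simp [he0]
      | succ k ih =>
        rw [Finset.sum_range_succ, ih (by omega)]
        have := hemono k (by omega)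
        omega
    calc ∑ j ∈ Finset.range ℓ, len1 j
        = ∑ j ∈ Finset.range ℓ, (r - 1 + (e (j + 1) - e j)) :=
          Finset.sum_congr rfl fun j _ => hlen1 j
      _ = ℓ * (r - 1) + r := by
          rw [Finset.sum_add_distrib, Finset.sum_const, htel ℓ le_rfl, heℓ]
          simp [mul_comm]
  have hTval : T.card = (ℓ * (r - 1) + r) * ((r - 1) * r ^ d) := by
    rw [hTcard]
    calc ∑ j ∈ Finset.range ℓ, (r - 1) * (len1 j * r ^ d)
        = ∑ j ∈ Finset.range ℓ, len1 j * ((r - 1) * r ^ d) :=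
          Finset.sum_congr rfl fun j _ => by ring
      _ = (∑ j ∈ Finset.range ℓ, len1 j) * ((r - 1) * r ^ d) :=
          (Finset.sum_mul _ _ _).symm
      _ = _ := by rw [hsumlen]
  have hM : (r - 1) ^ (d + 2) * (1 + ℓ) ≤ T.card := by
    rw [hTval]
    have h1 : (r - 1) ^ d ≤ r ^ d := Nat.pow_le_pow_left (by omega) d
    have h2 : (r - 1) ^ (d + 2) * (1 + ℓ) = ((1 + ℓ) * (r - 1)) * ((r - 1) * (r - 1) ^ d) := by
      ring
    rw [h2]
    have h3 : (1 + ℓ) * (r - 1) ≤ ℓ * (r - 1) + r := by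
      have : (1 + ℓ) * (r - 1) = ℓ * (r - 1) + (r - 1) := by ring
      omega
    exact Nat.mul_le_mul h3 (Nat.mul_le_mul_left _ h1)
  have hTN : T.card ≤ n ^ (d + 2) := by
    have := Finset.card_le_univ T
    rwa [hΛcard] at this
  set M := (r - 1) ^ (d + 2) * (1 + ℓ) with hMdef
  set N := n ^ (d + 2) with hNdef
  have hMN : M ≤ N := le_trans hM hTN
  have hcount : Nat.card {σ // P σ} ≤ q ^ (N - M) :=
    le_trans hcard1 (Nat.pow_le_pow_right hq0 (by omega))
  have hqR : (0 : ℝ) < (q : ℝ) := by positivity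
  rw [div_le_iff₀ (by positivity)]
  have hrw : (q : ℝ) ^ (-(M : ℤ)) * (q : ℝ) ^ N = (q : ℝ) ^ (N - M) := by
    rw [← zpow_natCast (q : ℝ) N, ← zpow_add₀ (ne_of_gt hqR)]
    have : -(M : ℤ) + N = ((N - M : ℕ) : ℤ) := by omega
    rw [this, zpow_natCast]
  rw [hrw]
  exact_mod_cast hcount
end
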